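/- arXiv:1104.0472 — 12 statements merged into one kernel-verified Lean document; each statement's English description precedes it below -/
import Mathlib

section
/- Let F be a field and α₁,…,α_k distinct elements of F. Then there exist nonzero constants β₁,…,β_k ∈ F and γ = V(α₁,…,α_k) ≠ 0 such that the polynomial identity ∑_{i=1}^k (t+αᵢ)^{k-1}/βᵢ = γ holds in F[t]. -/
/-!
With the nodal weights `wᵢ = ∏_{j ≠ i} (αᵢ - αⱼ)⁻¹`, Lagrange interpolation of `X ^ r` read off at
the coefficient of `X ^ (k-1)` gives `∑ wᵢ αᵢ ^ r = δ_{r, k-1}` for `r < k`. Expanding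
`(t + αᵢ) ^ (k-1)` binomially, this makes `∑ wᵢ (t + αᵢ) ^ (k-1) = 1`, so `βᵢ = (γ wᵢ)⁻¹` works.
-/

open Polynomial Finset Lagrange

namespace Lagrange

variable {F ι : Type*} [Field F] [DecidableEq ι] {s : Finset ι} {v : ι → F}

theorem sum_nodalWeight_mul_pow (hvs : Set.InjOn v s) {r : ℕ} (hr : r < #s) :
    ∑ i ∈ s, nodalWeight s v i * v i ^ r = if r = #s - 1 then 1 else 0 := by
  have hdeg : (X ^ r : F[X]).degree < #s := by
    rw [degree_X_pow]
    exact_mod_cast hr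
  have h := coeff_eq_sum hvs hdeg
  simp only [coeff_X_pow, eval_pow, eval_X] at h
  simp_rw [eq_comm (a := r), h]
  simp only [nodalWeight, prod_inv_distrib, div_eq_inv_mul]

theorem sum_C_nodalWeight_mul_X_add_C_pow (hvs : Set.InjOn v s) (hs : s.Nonempty) :
    ∑ i ∈ s, C (nodalWeight s v i) * (X + C (v i)) ^ (#s - 1) = 1 := by
  have hcard : 0 < #s := hs.card_pos
  ext m
  simp only [finsetSum_coeff, coeff_C_mul, coeff_X_add_C_pow, coeff_one]
  rcases Nat.lt_or_ge (#s - 1) m with hm | hm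
  · simp [Nat.choose_eq_zero_of_lt hm, show m ≠ 0 by omega]
  calc ∑ i ∈ s, nodalWeight s v i * (v i ^ (#s - 1 - m) * ((#s - 1).choose m : F))
      = (∑ i ∈ s, nodalWeight s v i * v i ^ (#s - 1 - m)) * ((#s - 1).choose m : F) := by
        rw [sum_mul]
        simp only [mul_assoc]
    _ = if m = 0 then 1 else 0 := by
        rw [sum_nodalWeight_mul_pow hvs (by omega)]
        rcases Nat.eq_zero_or_pos m with rfl | hm0
        · simp
        · simp [show #s - 1 - m ≠ #s - 1 by omega, hm0.ne']

end Lagrange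

theorem prod_sub_ne_zero_of_injective {F ι : Type*} [Field F] [Fintype ι] [LinearOrder ι]
    {α : ι → F} (hα : Function.Injective α) :
    ∏ p ∈ univ.filter (fun p : ι × ι => p.1 < p.2), (α p.1 - α p.2) ≠ 0 := by
  refine prod_ne_zero_iff.mpr fun p hp => sub_ne_zero.mpr fun h => ?_
  exact (mem_filter.mp hp).2.ne (hα h)

/-- For distinct `α₁,…,α_k` in a field `F`, there are nonzero constants
`β₁,…,β_k` such that `∑ (t+αᵢ)^(k-1)/βᵢ = γ` in `F[t]`, where
`γ = V(α₁,…,α_k) ≠ 0` is the Vandermonde determinant. -/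
theorem sum_pow_pred_eq_vandermonde (F : Type*) [Field F] (k : ℕ) (hk : 2 ≤ k)
    (α : Fin k → F) (hα : Function.Injective α) :
    ∃ β : Fin k → F, (∀ i, β i ≠ 0) ∧
      (∏ p ∈ Finset.univ.filter (fun p : Fin k × Fin k => p.1 < p.2),
          (α p.1 - α p.2)) ≠ 0 ∧
      (∑ i, Polynomial.C (β i)⁻¹ * (Polynomial.X + Polynomial.C (α i)) ^ (k - 1)) =
        Polynomial.C (∏ p ∈ Finset.univ.filter (fun p : Fin k × Fin k => p.1 < p.2),
          (α p.1 - α p.2)) := by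
  set γ := ∏ p ∈ univ.filter (fun p : Fin k × Fin k => p.1 < p.2), (α p.1 - α p.2)
  have hγ : γ ≠ 0 := prod_sub_ne_zero_of_injective hα
  have hs : (univ : Finset (Fin k)).Nonempty := univ_nonempty_iff.mpr ⟨⟨0, by omega⟩⟩
  have hsum := sum_C_nodalWeight_mul_X_add_C_pow hα.injOn hs
  rw [card_univ, Fintype.card_fin] at hsum
  refine ⟨fun i => (γ * nodalWeight univ α i)⁻¹,
    fun i => inv_ne_zero (mul_ne_zero hγ (nodalWeight_ne_zero hα.injOn (mem_univ i))), hγ, ?_⟩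
  simp only [inv_inv, map_mul, mul_assoc, ← mul_sum, hsum, mul_one]
end

section
/- Let F be a field whose characteristic does not divide k, and let α₁,…,α_k be distinct elements of F. Then there exist nonzero β₁,…,β_k ∈ F, γ = V(α₁,…,α_k) ≠ 0, and δ ∈ F such that ∑_{i=1}^k (t+αᵢ)^k/βᵢ = γkt + δ as polynomials in F[t]. -/
/-!
With the weights `wᵢ = 1 / ∏_{j ≠ i} (αᵢ - αⱼ)`, the sum `∑ wᵢ αᵢ ^ m` is the coefficient of
`X ^ (k - 1)` in the Lagrange interpolant of `X ^ m` at the nodes `αᵢ`; for `m < k` that interpolant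
is `X ^ m` itself, so the sum is `1` if `m = k - 1` and `0` otherwise. Expanding `(t + αᵢ) ^ k`, the
coefficient of `t ^ n` in `∑ wᵢ (t + αᵢ) ^ k` is `(k choose n) ∑ wᵢ αᵢ ^ (k - n)`, which for `n ≥ 1`
is `k` when `n = 1` and vanishes otherwise. Hence `βᵢ = ∏_{j ≠ i} (αᵢ - αⱼ) / γ` works.
-/

open Polynomial

open Finset in
theorem Lagrange.sum_pow_div_prod_sub {F ι : Type*} [Field F] [DecidableEq ι] {s : Finset ι}
    {v : ι → F} (hvs : Set.InjOn v s) {m : ℕ} (hm : m < #s) :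
    ∑ i ∈ s, v i ^ m / ∏ j ∈ s.erase i, (v i - v j) = if m = #s - 1 then 1 else 0 := by
  have h := coeff_eq_sum hvs (P := X ^ m) (by rw [degree_X_pow]; exact_mod_cast hm)
  simp only [coeff_X_pow, eval_pow, eval_X] at h
  rw [← h]
  simp only [eq_comm]

theorem sum_C_mul_X_add_C_pow_eq {R ι : Type*} [CommRing R] (s : Finset ι) (w a : ι → R) (k : ℕ)
    (hw : ∀ m < k, ∑ i ∈ s, w i * a i ^ m = if m = k - 1 then 1 else 0) :
    ∑ i ∈ s, C (w i) * (X + C (a i)) ^ k = C (k : R) * X + C (∑ i ∈ s, w i * a i ^ k) := by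
  ext n
  simp only [finsetSum_coeff, coeff_C_mul, coeff_X_add_C_pow, coeff_add, coeff_X, coeff_C]
  rcases Nat.eq_zero_or_pos n with rfl | hn
  · simp
  have hcoeff : ∑ i ∈ s, w i * (a i ^ (k - n) * (k.choose n : R)) =
      (k.choose n : R) * ∑ i ∈ s, w i * a i ^ (k - n) := by
    rw [Finset.mul_sum]; exact Finset.sum_congr rfl fun i _ => by ring
  rw [hcoeff, if_neg hn.ne']
  rcases le_or_gt n k with hnk | hnk
  · rw [hw (k - n) (Nat.sub_lt (by omega) hn)]
    obtain rfl | hn1 := eq_or_ne n 1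
    · simp
    · have hkn : k - n ≠ k - 1 := by omega
      simp [hkn, Ne.symm hn1]
  · obtain rfl | hn1 := eq_or_ne n 1
    · obtain rfl : k = 0 := by omega
      simp
    · simp [Nat.choose_eq_zero_of_lt hnk, Ne.symm hn1]

theorem sum_pow_eq_linear_general (F : Type*) [Field F] (k : ℕ)
    (α : Fin k → F) (hα : Function.Injective α) :
    ∃ (β : Fin k → F) (δ : F), (∀ i, β i ≠ 0) ∧
      (∏ p ∈ Finset.univ.filter (fun p : Fin k × Fin k => p.1 < p.2),
          (α p.1 - α p.2)) ≠ 0 ∧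
      (∑ i, Polynomial.C (β i)⁻¹ * (Polynomial.X + Polynomial.C (α i)) ^ k) =
        Polynomial.C ((∏ p ∈ Finset.univ.filter (fun p : Fin k × Fin k => p.1 < p.2),
          (α p.1 - α p.2)) * (k : F)) * Polynomial.X + Polynomial.C δ := by
  set γ := ∏ p ∈ Finset.univ.filter (fun p : Fin k × Fin k => p.1 < p.2), (α p.1 - α p.2)
  set π : Fin k → F := fun i => ∏ j ∈ Finset.univ.erase i, (α i - α j)
  have hγ : γ ≠ 0 := Finset.prod_ne_zero_iff.mpr fun p hp =>
    sub_ne_zero.mpr <| hα.ne (Finset.mem_filter.mp hp).2.ne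
  have hπ : ∀ i, π i ≠ 0 := fun i => Finset.prod_ne_zero_iff.mpr fun j hj =>
    sub_ne_zero.mpr <| hα.ne (Finset.ne_of_mem_erase hj).symm
  have hw : ∀ m < k, ∑ i, (π i)⁻¹ * α i ^ m = if m = k - 1 then 1 else 0 := fun m hm => by
    simpa [div_eq_inv_mul] using Lagrange.sum_pow_div_prod_sub hα.injOn (s := Finset.univ)
      (by simpa using hm)
  refine ⟨fun i => π i / γ, γ * ∑ i, (π i)⁻¹ * α i ^ k,
    fun i => div_ne_zero (hπ i) hγ, hγ, ?_⟩
  calc ∑ i, C (π i / γ)⁻¹ * (X + C (α i)) ^ k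
      = C γ * ∑ i, C (π i)⁻¹ * (X + C (α i)) ^ k := by
        rw [Finset.mul_sum]
        refine Finset.sum_congr rfl fun i _ => ?_
        rw [inv_div, div_eq_mul_inv, C_mul, mul_assoc]
    _ = _ := by
        rw [sum_C_mul_X_add_C_pow_eq _ _ _ k hw, C_mul, C_mul]; ring

/-- For distinct `α₁,…,α_k` in a field whose characteristic does not divide `k`,
there are nonzero `β₁,…,β_k`, `γ = V(α₁,…,α_k) ≠ 0` and `δ ∈ F` such that
`∑ (t+αᵢ)^k/βᵢ = γ k t + δ` in `F[t]`. -/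
theorem sum_pow_eq_linear (F : Type*) [Field F] (k : ℕ) (hk : 2 ≤ k)
    (hchar : (k : F) ≠ 0) (α : Fin k → F) (hα : Function.Injective α) :
    ∃ (β : Fin k → F) (δ : F), (∀ i, β i ≠ 0) ∧
      (∏ p ∈ Finset.univ.filter (fun p : Fin k × Fin k => p.1 < p.2),
          (α p.1 - α p.2)) ≠ 0 ∧
      (∑ i, Polynomial.C (β i)⁻¹ * (Polynomial.X + Polynomial.C (α i)) ^ k) =
        Polynomial.C ((∏ p ∈ Finset.univ.filter (fun p : Fin k × Fin k => p.1 < p.2),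
          (α p.1 - α p.2)) * (k : F)) * Polynomial.X + Polynomial.C δ :=
  sum_pow_eq_linear_general F k α hα
end

section
/- Let A be an integral domain and k ≥ 2, s ≥ 1, n ≥ 1. Every element of A[t] is a sum of s k-th powers in A[t] if and only if every element of A[x₁,…,xₙ] is a sum of s k-th powers in A[x₁,…,xₙ]. -/
open Polynomial

theorem exists_sum_pow_eq_map {R S F : Type*} [CommSemiring R] [CommSemiring S] [FunLike F R S]
    [RingHomClass F R S] (f : F) {k s : ℕ} {x : R} (h : ∃ Q : Fin s → R, x = ∑ i, Q i ^ k) :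
    ∃ Q : Fin s → S, f x = ∑ i, Q i ^ k := by
  obtain ⟨Q, rfl⟩ := h
  exact ⟨fun i => f (Q i), by simp only [map_sum, map_pow]⟩

theorem Polynomial.exists_sum_pow_eq_of_X {A B : Type*} [CommSemiring A] [CommSemiring B]
    [Algebra A B] {k s : ℕ} (h : ∃ Q : Fin s → A[X], X = ∑ i, Q i ^ k) (b : B) :
    ∃ Q : Fin s → B, b = ∑ i, Q i ^ k := by
  simpa only [aeval_X] using exists_sum_pow_eq_map (aeval b) h

theorem MvPolynomial.exists_sum_pow_eq_of_X {A B σ : Type*} [CommSemiring A] [CommSemiring B]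
    [Algebra A B] {k s : ℕ} (j : σ)
    (h : ∃ Q : Fin s → MvPolynomial σ A, X j = ∑ i, Q i ^ k) (b : B) :
    ∃ Q : Fin s → B, b = ∑ i, Q i ^ k := by
  simpa only [aeval_X] using exists_sum_pow_eq_map (aeval fun _ : σ => b) h

theorem waring_polynomial_iff_waring_mvPolynomial_general (A : Type*) [CommRing A]
    (k s n : ℕ) (hn : 1 ≤ n) :
    (∀ P : Polynomial A, ∃ Q : Fin s → Polynomial A, P = ∑ i, Q i ^ k) ↔
    (∀ P : MvPolynomial (Fin n) A, ∃ Q : Fin s → MvPolynomial (Fin n) A,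
        P = ∑ i, Q i ^ k) :=
  ⟨fun h P => Polynomial.exists_sum_pow_eq_of_X (h X) P,
    fun h P =>
      MvPolynomial.exists_sum_pow_eq_of_X (⟨0, hn⟩ : Fin n) (h (MvPolynomial.X ⟨0, hn⟩)) P⟩

/-- Every element of `A[t]` is a sum of `s` `k`-th powers iff every element of
`A[x₁,…,xₙ]` is a sum of `s` `k`-th powers. -/
theorem waring_polynomial_iff_waring_mvPolynomial (A : Type*) [CommRing A] [IsDomain A]
    (k s n : ℕ) (hk : 2 ≤ k) (hs : 1 ≤ s) (hn : 1 ≤ n) :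
    (∀ P : Polynomial A, ∃ Q : Fin s → Polynomial A, P = ∑ i, Q i ^ k) ↔
    (∀ P : MvPolynomial (Fin n) A, ∃ Q : Fin s → MvPolynomial (Fin n) A,
        P = ∑ i, Q i ^ k) :=
  waring_polynomial_iff_waring_mvPolynomial_general A k s n hn
end

section
/- Let A be an integral domain, k ≥ 2, s ≥ 1. Then every element of A[t] is a sum of s k-th powers in A[t] if and only if the polynomial t itself is a sum of s k-th powers in A[t]. -/
open Polynomial

theorem Polynomial.eq_sum_comp_pow_of_X_eq_sum_pow {R ι : Type*} [CommSemiring R]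
    (s : Finset ι) (Q : ι → R[X]) (k : ℕ) (hQ : X = ∑ i ∈ s, Q i ^ k) (P : R[X]) :
    P = ∑ i ∈ s, (Q i).comp P ^ k := by
  calc P = X.comp P := X_comp.symm
    _ = ∑ i ∈ s, (Q i).comp P ^ k := by
      rw [hQ, ← coe_compRingHom_apply, map_sum]
      simp only [map_pow, coe_compRingHom_apply]

theorem waring_polynomial_iff_X_general (A : Type*) [CommRing A]
    (k s : ℕ) :
    (∀ P : Polynomial A, ∃ Q : Fin s → Polynomial A, P = ∑ i, Q i ^ k) ↔
    (∃ Q : Fin s → Polynomial A, Polynomial.X = ∑ i, Q i ^ k) :=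
  ⟨fun h => h X, fun ⟨Q, hQ⟩ P =>
    ⟨fun i => (Q i).comp P, eq_sum_comp_pow_of_X_eq_sum_pow _ Q k hQ P⟩⟩

/-- Every element of `A[t]` is a sum of `s` `k`-th powers iff the polynomial
`t` itself is a sum of `s` `k`-th powers in `A[t]`. -/
theorem waring_polynomial_iff_X (A : Type*) [CommRing A] [IsDomain A]
    (k s : ℕ) (hk : 2 ≤ k) (hs : 1 ≤ s) :
    (∀ P : Polynomial A, ∃ Q : Fin s → Polynomial A, P = ∑ i, Q i ^ k) ↔
    (∃ Q : Fin s → Polynomial A, Polynomial.X = ∑ i, Q i ^ k) :=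
  waring_polynomial_iff_X_general A k s
end

section
/- Let F be a field with more than k elements whose characteristic does not divide k, and such that every element of F is a sum of k-th powers of elements of F. Then for every n ≥ 1, every polynomial P ∈ F[x₁,…,xₙ] is a sum of finitely many k-th powers of polynomials in F[x₁,…,xₙ]. -/
/-!
In any commutative `F`-algebra every element `x` is an `F`-linear combination of `k`-th powers:
for `k + 1` distinct `c j ∈ F`, expanding `∑ j, lam j • (x + c j) ^ k` binomially shows that it
equals `x` as soon as the weights solve the invertible Vandermonde system
`∑ j, lam j * c j ^ m = if m = k - 1 then k⁻¹ else 0` for `m ≤ k`. Each weight is a sum of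
`k`-th powers in `F`, and `(∑ i, b i ^ k) • y ^ k = ∑ i, (b i • y) ^ k`.
-/

open Finset Matrix

theorem AddSubmonoid.mem_closure_range_iff_exists_fin_sum {M ι : Type*} [AddCommMonoid M]
    {f : ι → M} {x : M} :
    x ∈ closure (Set.range f) ↔ ∃ (s : ℕ) (g : Fin s → ι), x = ∑ i, f (g i) := by
  refine ⟨fun hx => ?_, ?_⟩
  · induction hx using closure_induction with
    | mem x hx => obtain ⟨i, rfl⟩ := hx; exact ⟨1, fun _ => i, by simp⟩
    | zero => exact ⟨0, Fin.elim0, by simp⟩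
    | add x y _ _ hx hy =>
      obtain ⟨s, g, rfl⟩ := hx
      obtain ⟨t, h, rfl⟩ := hy
      exact ⟨s + t, Fin.append g h, by simp [Fin.sum_univ_add]⟩
  · rintro ⟨s, g, rfl⟩
    exact AddSubmonoid.sum_mem _ fun i _ => subset_closure (Set.mem_range_self _)

theorem Cardinal.nonempty_fin_succ_embedding_of_natCast_lt {α : Type*} {k : ℕ}
    (h : (k : Cardinal) < Cardinal.mk α) : Nonempty (Fin (k + 1) ↪ α) := by
  rw [← lift_mk_le', mk_fin, lift_natCast, lift_id'.{0}, Nat.cast_succ]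
  exact natCast_add_one_le_iff.mpr h

theorem Matrix.exists_vecMul_vandermonde_eq {F : Type*} [Field F] {n : ℕ} {c : Fin n → F}
    (hc : Function.Injective c) (u : Fin n → F) : ∃ lam, lam ᵥ* vandermonde c = u :=
  vecMul_surjective_iff_isUnit.mpr ((isUnit_iff_isUnit_det _).mpr
    (det_vandermonde_ne_zero_iff.mpr hc).isUnit) u

theorem sum_smul_add_algebraMap_pow {R A ι : Type*} [CommSemiring R] [CommSemiring A]
    [Algebra R A] (s : Finset ι) (lam c : ι → R) (k : ℕ) (x : A) :
    ∑ j ∈ s, lam j • (x + algebraMap R A (c j)) ^ k =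
      ∑ i ∈ range (k + 1), ((∑ j ∈ s, lam j * c j ^ (k - i)) * k.choose i) • x ^ i := by
  simp_rw [add_pow, smul_sum, sum_mul, sum_smul]
  rw [sum_comm]
  refine sum_congr rfl fun i _ => sum_congr rfl fun j _ => ?_
  rw [Algebra.smul_def, Algebra.smul_def]
  simp only [map_mul, map_pow, map_natCast]
  ring

theorem exists_forall_eq_sum_smul_add_algebraMap_pow {F : Type*} (A : Type*) [Field F]
    [CommSemiring A] [Algebra F A] {k : ℕ} (hk : (k : F) ≠ 0) {c : Fin (k + 1) → F}
    (hc : Function.Injective c) :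
    ∃ lam : Fin (k + 1) → F, ∀ x : A, x = ∑ j, lam j • (x + algebraMap F A (c j)) ^ k := by
  have h1 : 1 ∈ range (k + 1) := by
    simpa using Nat.pos_of_ne_zero fun h => hk (by rw [h, Nat.cast_zero])
  obtain ⟨lam, hlam⟩ := exists_vecMul_vandermonde_eq hc
    fun m => if (m : ℕ) = k - 1 then (k : F)⁻¹ else 0
  have hmoment : ∀ i ∈ range (k + 1),
      ∑ j, lam j * c j ^ (k - i) = if i = 1 then (k : F)⁻¹ else 0 := by
    intro i hi
    have := congrFun hlam ⟨k - i, by grind⟩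
    simp only [vecMul, dotProduct, vandermonde_apply] at this
    rw [this]
    grind
  refine ⟨lam, fun x => ?_⟩
  rw [sum_smul_add_algebraMap_pow, sum_eq_single_of_mem 1 h1 fun i hi hi1 => by
    rw [hmoment i hi, if_neg hi1, zero_mul, zero_smul]]
  rw [hmoment 1 h1, if_pos rfl, Nat.choose_one_right, inv_mul_cancel₀ hk, one_smul, pow_one]

theorem smul_pow_mem_closure_range_pow {F A : Type*} [CommSemiring F] [CommSemiring A]
    [Algebra F A] {k : ℕ} {a : F} (ha : ∃ (s : ℕ) (b : Fin s → F), a = ∑ i, b i ^ k) (y : A) :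
    a • y ^ k ∈ AddSubmonoid.closure (Set.range (· ^ k : A → A)) := by
  obtain ⟨s, b, rfl⟩ := ha
  rw [sum_smul]
  exact AddSubmonoid.sum_mem _ fun i _ =>
    AddSubmonoid.subset_closure ⟨b i • y, smul_pow (b i) y k⟩

theorem Algebra.exists_eq_sum_pow {F A : Type*} [Field F] [CommSemiring A] [Algebra F A] {k : ℕ}
    (hcard : (k : Cardinal) < Cardinal.mk F) (hchar : (k : F) ≠ 0)
    (hW : ∀ a : F, ∃ (s : ℕ) (b : Fin s → F), a = ∑ i, b i ^ k) (x : A) :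
    ∃ (s : ℕ) (Q : Fin s → A), x = ∑ i, Q i ^ k := by
  obtain ⟨c⟩ := Cardinal.nonempty_fin_succ_embedding_of_natCast_lt hcard
  obtain ⟨lam, hlam⟩ := exists_forall_eq_sum_smul_add_algebraMap_pow A hchar c.injective
  refine (AddSubmonoid.mem_closure_range_iff_exists_fin_sum (f := fun y : A => y ^ k)).mp ?_
  rw [hlam x]
  exact AddSubmonoid.sum_mem _ fun j _ => smul_pow_mem_closure_range_pow (hW (lam j)) _

theorem mvPolynomial_sum_of_kth_powers_general (F : Type*) [Field F] (k : ℕ)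
    (hcard : (k : Cardinal) < Cardinal.mk F) (hchar : (k : F) ≠ 0)
    (hW : ∀ a : F, ∃ (s : ℕ) (b : Fin s → F), a = ∑ i, b i ^ k) :
    ∀ n : ℕ, 1 ≤ n → ∀ P : MvPolynomial (Fin n) F,
      ∃ (s : ℕ) (Q : Fin s → MvPolynomial (Fin n) F), P = ∑ i, Q i ^ k :=
  fun _ _ => Algebra.exists_eq_sum_pow hcard hchar hW

/-- If `F` has more than `k` elements, its characteristic does not divide `k`,
and every element of `F` is a (finite) sum of `k`-th powers, then every
polynomial in `F[x₁,…,xₙ]` is a finite sum of `k`-th powers. -/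
theorem mvPolynomial_sum_of_kth_powers (F : Type*) [Field F] (k : ℕ) (hk : 2 ≤ k)
    (hcard : (k : Cardinal) < Cardinal.mk F) (hchar : (k : F) ≠ 0)
    (hW : ∀ a : F, ∃ (s : ℕ) (b : Fin s → F), a = ∑ i, b i ^ k) :
    ∀ n : ℕ, 1 ≤ n → ∀ P : MvPolynomial (Fin n) F,
      ∃ (s : ℕ) (Q : Fin s → MvPolynomial (Fin n) F), P = ∑ i, Q i ^ k :=
  mvPolynomial_sum_of_kth_powers_general F k hcard hchar hW
end

section
/- Let F be a field with more than k distinct elements whose characteristic does not divide k. Every polynomial P ∈ F[x₁,…,xₙ] of degree d can be written as P = δ₁Q₁^k + ⋯ + δ_kQ_k^k where δᵢ ∈ F and Qᵢ ∈ F[x₁,…,xₙ] with deg Qᵢ^k ≤ kd. -/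
/-!
It suffices to find `δᵢ, aᵢ ∈ F` with `∑ δᵢ (X + aᵢ)^k = X` in `F[X]` and substitute `X := P`,
taking `Qᵢ = P + aᵢ`. For `k` distinct points `tᵢ` the Vandermonde system lets us prescribe the
moments `∑ δᵢ tᵢ^m` for `m < k`: asking them to vanish except `∑ δᵢ tᵢ^(k-1) = 1/k` makes
`∑ δᵢ (X + tᵢ)^k = X + c` for a constant `c`, and the shift `aᵢ = tᵢ - c` removes `c`.
-/

open Polynomial

section

variable {F : Type*} [Field F]

theorem Matrix.exists_sum_mul_pow_eq_of_injective {k : ℕ} {t : Fin k → F} (ht : Function.Injective t)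
    (e : Fin k → F) : ∃ δ : Fin k → F, ∀ m : Fin k, ∑ i, δ i * t i ^ (m : ℕ) = e m := by
  have hunit : IsUnit (vandermonde t) :=
    (isUnit_iff_isUnit_det _).2 (det_vandermonde_ne_zero_iff.2 ht).isUnit
  obtain ⟨δ, hδ⟩ := vecMul_surjective_iff_isUnit.2 hunit e
  exact ⟨δ, fun m => by simpa [vecMul, dotProduct] using congrFun hδ m⟩

theorem Polynomial.coeff_sum_C_mul_X_add_C_pow {R ι : Type*} [CommSemiring R] (s : Finset ι)
    (δ t : ι → R) (k j : ℕ) :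
    (∑ i ∈ s, C (δ i) * (X + C (t i)) ^ k).coeff j
      = (∑ i ∈ s, δ i * t i ^ (k - j)) * k.choose j := by
  simp only [finsetSum_coeff, coeff_C_mul, coeff_X_add_C_pow, Finset.sum_mul, mul_assoc]

theorem exists_sum_C_mul_X_add_C_pow_eq_X_add_C {k : ℕ} (hcard : (k : Cardinal) < Cardinal.mk F)
    (hk : (k : F) ≠ 0) :
    ∃ (δ t : Fin k → F) (c : F), ∑ i, C (δ i) * (X + C (t i)) ^ k = X + C c := by
  obtain ⟨t⟩ : Nonempty (Fin k ↪ F) := by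
    rw [← Cardinal.lift_mk_le', Cardinal.mk_fin, Cardinal.lift_natCast, Cardinal.lift_uzero]
    exact hcard.le
  obtain ⟨δ, hδ⟩ := Matrix.exists_sum_mul_pow_eq_of_injective t.injective
    fun m => if (m : ℕ) = k - 1 then (k : F)⁻¹ else 0
  refine ⟨δ, t, ∑ i, δ i * t i ^ k, ?_⟩
  ext j
  rw [coeff_sum_C_mul_X_add_C_pow, coeff_add, coeff_X, coeff_C]
  rcases Nat.eq_zero_or_pos j with rfl | hj
  · simp
  rcases le_or_gt j k with hjk | hjk
  · have hmoment := hδ ⟨k - j, by omega⟩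
    simp only at hmoment
    rw [hmoment]
    rcases eq_or_ne j 1 with rfl | hj1
    · simp [hk]
    · simp [Ne.symm hj1, hj.ne', show k - j ≠ k - 1 by omega]
  · have hk0 : k ≠ 0 := by rintro rfl; simp at hk
    simp [Nat.choose_eq_zero_of_lt hjk, show 1 ≠ j by omega, hj.ne']

theorem exists_sum_C_mul_X_add_C_pow_eq_X {k : ℕ} (hcard : (k : Cardinal) < Cardinal.mk F)
    (hk : (k : F) ≠ 0) :
    ∃ δ a : Fin k → F, ∑ i, C (δ i) * (X + C (a i)) ^ k = X := by
  obtain ⟨δ, t, c, h⟩ := exists_sum_C_mul_X_add_C_pow_eq_X_add_C hcard hk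
  refine ⟨δ, fun i => t i - c, ?_⟩
  have := congrArg (·.comp (X - C c)) h
  simpa [sum_comp, sub_add_eq_add_sub, add_sub_assoc] using this

end

theorem decomposition_k_terms_scaled_general (F : Type*) [Field F] (k : ℕ)
    (hcard : (k : Cardinal) < Cardinal.mk F) (hchar : (k : F) ≠ 0)
    (n d : ℕ) (P : MvPolynomial (Fin n) F) (hP : P.totalDegree = d) :
    ∃ (δ : Fin k → F) (Q : Fin k → MvPolynomial (Fin n) F),
      P = ∑ i, MvPolynomial.C (δ i) * Q i ^ k ∧
      ∀ i, (Q i ^ k).totalDegree ≤ k * d := by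
  obtain ⟨δ, a, hid⟩ := exists_sum_C_mul_X_add_C_pow_eq_X hcard hchar
  refine ⟨δ, fun i => P + MvPolynomial.C (a i), ?_, fun i => ?_⟩
  · simpa [MvPolynomial.algebraMap_eq] using (congrArg (aeval P) hid).symm
  · calc ((P + MvPolynomial.C (a i)) ^ k).totalDegree
        ≤ k * (P + MvPolynomial.C (a i)).totalDegree := MvPolynomial.totalDegree_pow _ _
      _ ≤ k * d := by
        gcongr
        have hadd := MvPolynomial.totalDegree_add P (MvPolynomial.C (a i))
        simpa [MvPolynomial.totalDegree_C, hP] using hadd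

/-- Every polynomial of degree `d` over a suitable field is a combination
`δ₁Q₁^k + ⋯ + δ_kQ_k^k` with `deg Qᵢ^k ≤ kd`. -/
theorem decomposition_k_terms_scaled (F : Type*) [Field F] (k : ℕ) (hk : 2 ≤ k)
    (hcard : (k : Cardinal) < Cardinal.mk F) (hchar : (k : F) ≠ 0)
    (n d : ℕ) (hn : 1 ≤ n) (P : MvPolynomial (Fin n) F) (hP : P.totalDegree = d) :
    ∃ (δ : Fin k → F) (Q : Fin k → MvPolynomial (Fin n) F),
      P = ∑ i, MvPolynomial.C (δ i) * Q i ^ k ∧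
      ∀ i, (Q i ^ k).totalDegree ≤ k * d :=
  decomposition_k_terms_scaled_general F k hcard hchar n d P hP
end

section
/- Let F be a field with more than k distinct elements whose characteristic does not divide k. Every polynomial P ∈ F[x,y] of degree d admits a decomposition P = δ₁Q₁^k + ⋯ + δ_sQ_s^k with δᵢ ∈ F, Qᵢ ∈ F[x,y], deg Qᵢ^k ≤ d + 2(k-1)², and s ≤ k(d+1)(d+2)/2. -/
/-!
Write a monomial `x^μ` as `A^(k-1) B` with `A = x^q`, `q = ⌊μ/k⌋`, `B = x^(μ - (k-1)q)`. For
`k` distinct nonzero `vᵢ ∈ F`, the Vandermonde system `∑ cᵢ vᵢ^j = [j = 1]` (`1 ≤ j ≤ k`) is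
solvable, and by the binomial theorem `∑ cᵢ (vᵢ B + A)^k = (∑ cᵢ) A^k + k A^(k-1) B`. So `x^μ`
is a combination of `k` scaled `k`-th powers and of `A^k = x^(kq)`. Doing this for the monomials
of `P` whose exponent is not divisible by `k` leaves a remainder whose monomials are `k`-th
powers of monomials, with exponents different from the ones already treated: at most `k` terms
are spent per monomial of degree `≤ d`. In each variable `k (μⱼ - (k-1)qⱼ) = μⱼ + (k-1)(μⱼ % k)`,
which gives the degree bound.
-/

open Finset

theorem sum_mul_mul_add_pow {R ι : Type*} [CommSemiring R] [Fintype ι] {k : ℕ} (c v : ι → R)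
    (hcv : ∀ j < k, ∑ i, c i * v i ^ (j + 1) = if j = 0 then 1 else 0) (a b : R) :
    ∑ i, c i * (v i * b + a) ^ k = (∑ i, c i) * a ^ k + k * (b * a ^ (k - 1)) := by
  have hexpand : ∑ i, c i * (v i * b + a) ^ k
      = ∑ j ∈ range (k + 1), (∑ i, c i * v i ^ j) * (b ^ j * a ^ (k - j) * k.choose j) := by
    simp_rw [add_pow, mul_sum, mul_pow]
    rw [sum_comm]
    refine sum_congr rfl fun j _ => ?_
    rw [sum_mul]
    exact sum_congr rfl fun i _ => by ring
  rw [hexpand, sum_range_succ']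
  simp only [pow_zero, mul_one, one_mul, Nat.choose_zero_right, Nat.cast_one, Nat.sub_zero]
  rw [sum_congr rfl fun j hj => by rw [hcv j (mem_range.1 hj)], add_comm]
  congr 1
  rcases Nat.eq_zero_or_pos k with rfl | hk
  · simp
  · simp only [ite_mul, one_mul, zero_mul, sum_ite_eq', mem_range, hk, if_true, zero_add, pow_one,
      Nat.choose_one_right]
    ring

theorem exists_injective_fin_ne_zero {G : Type*} [AddGroup G] {k : ℕ}
    (hcard : (k : Cardinal) < Cardinal.mk G) :
    ∃ v : Fin k → G, Function.Injective v ∧ ∀ i, v i ≠ 0 := by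
  obtain ⟨f⟩ : Nonempty (Fin (k + 1) ↪ G) := by
    rw [← Cardinal.lift_mk_le', Cardinal.lift_mk_fin, Cardinal.lift_uzero, Nat.cast_succ,
      ← Cardinal.succ_natCast]
    exact Order.succ_le_of_lt hcard
  refine ⟨fun i => f i.castSucc - f (Fin.last k), fun i j h => ?_, fun i h => ?_⟩
  · exact Fin.castSucc_injective k (f.injective (sub_left_injective h))
  · exact (Fin.castSucc_lt_last i).ne (f.injective (sub_eq_zero.1 h))

theorem exists_sum_mul_pow_succ_eq_ite {F : Type*} [Field F] {k : ℕ}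
    (hcard : (k : Cardinal) < Cardinal.mk F) :
    ∃ c v : Fin k → F, ∀ j < k, ∑ i, c i * v i ^ (j + 1) = if j = 0 then 1 else 0 := by
  obtain ⟨v, hinj, hv⟩ := exists_injective_fin_ne_zero hcard
  have hunit : IsUnit (Matrix.vandermonde v) :=
    (Matrix.isUnit_iff_isUnit_det _).2 (Matrix.det_vandermonde_ne_zero_iff.2 hinj).isUnit
  obtain ⟨w, hw⟩ := Matrix.vecMul_surjective_iff_isUnit.2 hunit
    fun j : Fin k => if (j : ℕ) = 0 then 1 else 0
  refine ⟨fun i => w i / v i, v, fun j hj => ?_⟩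
  have hwj := congrFun hw ⟨j, hj⟩
  simp only [Matrix.vecMul, dotProduct, Matrix.vandermonde_apply] at hwj
  rw [← hwj]
  exact sum_congr rfl fun i _ => by rw [pow_succ', ← mul_assoc, div_mul_cancel₀ _ (hv i)]

theorem Nat.mul_sub_mul_div_le (k m : ℕ) : k * (m - (k - 1) * (m / k)) ≤ m + (k - 1) ^ 2 := by
  rcases k with _ | n
  · simp
  have hdiv := Nat.div_add_mod m (n + 1)
  have hmod : m % (n + 1) ≤ n := Nat.lt_succ_iff.1 (Nat.mod_lt m n.succ_pos)
  have hsub : m - n * (m / (n + 1)) = m / (n + 1) + m % (n + 1) :=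
    Nat.sub_eq_of_eq_add (by linarith)
  rw [Nat.add_sub_cancel, hsub]
  nlinarith

namespace Finsupp

theorem mul_degree_sub_smul_floorDiv_le {σ : Type*} [Fintype σ] (k : ℕ) (μ : σ →₀ ℕ) :
    k * (μ - (k - 1) • (μ ⌊/⌋ k)).degree ≤ μ.degree + Fintype.card σ * (k - 1) ^ 2 := by
  calc k * (μ - (k - 1) • (μ ⌊/⌋ k)).degree = ∑ i, k * (μ i - (k - 1) * (μ i / k)) := by
        simp [degree_eq_sum, Finset.mul_sum]
    _ ≤ ∑ i, (μ i + (k - 1) ^ 2) :=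
        Finset.sum_le_sum fun i _ => Nat.mul_sub_mul_div_le k (μ i)
    _ = μ.degree + Fintype.card σ * (k - 1) ^ 2 := by simp [Finset.sum_add_distrib, degree_eq_sum]

theorem two_mul_card_le_of_degree_le {d : ℕ} (S : Finset (Fin 2 →₀ ℕ))
    (hS : ∀ μ ∈ S, μ.degree ≤ d) : 2 * #S ≤ (d + 1) * (d + 2) := by
  have hle : #S ≤ #((range (d + 1)).sigma antidiagonal) := by
    refine card_le_card_of_injOn (fun μ => ⟨μ 0 + μ 1, (μ 0, μ 1)⟩) (fun μ hμ => ?_)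
      fun μ _ ν _ h => ?_
    · have hμd := hS μ hμ
      rw [degree_eq_sum, Fin.sum_univ_two] at hμd
      simp only [mem_coe, mem_sigma, mem_range, HasAntidiagonal.mem_antidiagonal, and_true]
      omega
    · obtain ⟨-, h⟩ := Sigma.mk.inj_iff.1 h
      obtain ⟨h0, h1⟩ := Prod.ext_iff.1 (eq_of_heq h)
      ext i
      fin_cases i
      exacts [h0, h1]
  have hgauss : #((range (d + 1)).sigma antidiagonal) * 2 = (d + 1) * (d + 2) := by
    rw [card_sigma]
    simp only [Nat.card_antidiagonal]
    rw [sum_add_distrib, sum_const, card_range, smul_eq_mul, mul_one, add_mul,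
      sum_range_id_mul_two, Nat.add_sub_cancel]
    ring
  omega

end Finsupp

namespace MvPolynomial

variable {σ R : Type*}

def IsScaledPowSum [CommSemiring R] (k s e : ℕ) (P : MvPolynomial σ R) : Prop :=
  ∃ (δ : Fin s → R) (Q : Fin s → MvPolynomial σ R),
    P = ∑ i, C (δ i) * Q i ^ k ∧ ∀ i, (Q i ^ k).totalDegree ≤ e

namespace IsScaledPowSum

variable [CommSemiring R] {k s t e e' : ℕ} {P P' : MvPolynomial σ R}

theorem zero (k s e : ℕ) : IsScaledPowSum k s e (0 : MvPolynomial σ R) :=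
  ⟨0, 1, by simp, fun _ => by simp⟩

theorem single (δ : R) {Q : MvPolynomial σ R} (hQ : (Q ^ k).totalDegree ≤ e) :
    IsScaledPowSum k 1 e (C δ * Q ^ k) :=
  ⟨fun _ => δ, fun _ => Q, by simp, fun _ => hQ⟩

theorem add (hP : IsScaledPowSum k s e P) (hP' : IsScaledPowSum k t e P') :
    IsScaledPowSum k (s + t) e (P + P') := by
  obtain ⟨δ, Q, rfl, hQ⟩ := hP
  obtain ⟨δ', Q', rfl, hQ'⟩ := hP'
  exact ⟨Fin.append δ δ', Fin.append Q Q', by simp [Fin.sum_univ_add],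
    Fin.addCases (fun i => by simpa using hQ i) (fun i => by simpa using hQ' i)⟩

theorem mono (hP : IsScaledPowSum k s e P) (hst : s ≤ t) (he : e ≤ e') :
    IsScaledPowSum k t e' P := by
  obtain ⟨δ, Q, hPQ, hQ⟩ := hP
  have hP' : IsScaledPowSum k s e' P := ⟨δ, Q, hPQ, fun i => (hQ i).trans he⟩
  simpa [Nat.add_sub_cancel' hst] using hP'.add (zero k (t - s) e')

theorem sum {ι : Type*} (u : Finset ι) {n : ι → ℕ} {f : ι → MvPolynomial σ R}
    (h : ∀ x ∈ u, IsScaledPowSum k (n x) e (f x)) :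
    IsScaledPowSum k (∑ x ∈ u, n x) e (∑ x ∈ u, f x) := by
  induction u using Finset.cons_induction with
  | empty => exact zero k 0 e
  | cons x u _ ih =>
    rw [sum_cons, sum_cons]
    exact (h x (mem_cons_self x u)).add (ih fun y hy => h y (mem_cons_of_mem hy))

theorem of_mem_restrictSupport
    (hP : P ∈ restrictSupport R {ν | (∃ ν', k • ν' = ν) ∧ ν.degree ≤ e}) :
    IsScaledPowSum k #P.support e P := by
  choose root hroot using fun ν (hν : ν ∈ P.support) => (hP hν).1
  have hpow : ∀ ν (hν : ν ∈ P.support),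
      monomial (root ν hν) 1 ^ k = (monomial ν 1 : MvPolynomial σ R) :=
    fun ν hν => by rw [monomial_pow, one_pow, hroot]
  have hP_eq : P = ∑ ν ∈ P.support.attach, C (P.coeff ν) * monomial (root ν ν.2) 1 ^ k := by
    conv_lhs => rw [P.as_sum, ← sum_attach]
    exact sum_congr rfl fun ν _ => by rw [hpow, C_mul_monomial, mul_one]
  have hsum : IsScaledPowSum k (∑ _ ∈ P.support.attach, 1) e
      (∑ ν ∈ P.support.attach, C (P.coeff ν) * monomial (root ν ν.2) 1 ^ k) :=
    sum _ fun ν _ => single _ <| by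
      rw [hpow]
      exact (totalDegree_monomial_le _ _).trans (hP ν.2).2
  rwa [← hP_eq, ← card_eq_sum_ones, card_attach] at hsum

end IsScaledPowSum

theorem sub_sum_monomial_mem_restrictSupport [CommRing R] {k : ℕ} (hk : 0 < k)
    {P : MvPolynomial σ R} {N : Finset (σ →₀ ℕ)} (hN : N ⊆ P.support)
    (hmul : ∀ μ ∈ P.support, μ ∉ N → ∃ ν, k • ν = μ) (g : (σ →₀ ℕ) → R) :
    P - ∑ μ ∈ N, (monomial μ (P.coeff μ) + monomial (k • (μ ⌊/⌋ k)) (g μ)) ∈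
      restrictSupport R {ν | (∃ ν', k • ν' = ν) ∧ ν.degree ≤ P.totalDegree} := by
  classical
  have hsplit := sum_sdiff hN (f := fun μ => monomial μ (P.coeff μ))
  rw [← P.as_sum] at hsplit
  have hP_eq : P - ∑ μ ∈ N, (monomial μ (P.coeff μ) + monomial (k • (μ ⌊/⌋ k)) (g μ))
      = ∑ μ ∈ P.support \ N, monomial μ (P.coeff μ)
        - ∑ μ ∈ N, monomial (k • (μ ⌊/⌋ k)) (g μ) := by
    rw [sum_add_distrib]
    linear_combination -hsplit
  rw [hP_eq]
  refine sub_mem (sum_mem fun μ hμ => ?_) (sum_mem fun μ hμ => ?_)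
  · obtain ⟨hμP, hμN⟩ := mem_sdiff.1 hμ
    exact (monomial_mem_restrictSupport _).2 (.inl ⟨hmul μ hμP hμN, le_totalDegree hμP⟩)
  · exact (monomial_mem_restrictSupport _).2 (.inl ⟨⟨_, rfl⟩,
      (Finsupp.degree_mono (smul_floorDiv_le hk)).trans (le_totalDegree (hN hμ))⟩)

variable {F : Type*} [Field F]

theorem isScaledPowSum_monomial_add [Fintype σ] {k : ℕ} {c v : Fin k → F}
    (hcv : ∀ j < k, ∑ i, c i * v i ^ (j + 1) = if j = 0 then 1 else 0) (hk : (k : F) ≠ 0)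
    {d : ℕ} {μ : σ →₀ ℕ} (hμ : μ.degree ≤ d) (a : F) :
    IsScaledPowSum k k (d + Fintype.card σ * (k - 1) ^ 2)
      (monomial μ a + monomial (k • (μ ⌊/⌋ k)) (a / k * ∑ i, c i)) := by
  have hk0 : 0 < k := Nat.pos_of_ne_zero (by rintro rfl; exact hk Nat.cast_zero)
  set q := μ ⌊/⌋ k
  set b := μ - (k - 1) • q
  have hle : (k - 1) • q ≤ μ :=
    (nsmul_le_nsmul_left zero_le (k.sub_le 1)).trans (smul_floorDiv_le hk0)
  have hcvC : ∀ j < k, ∑ i, C (c i) * C (v i) ^ (j + 1) =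
      (if j = 0 then 1 else 0 : MvPolynomial σ F) := by
    intro j hj
    simp only [← C_pow, ← C_mul, ← map_sum, hcv j hj]
    split_ifs <;> simp
  refine ⟨fun i => a / k * c i, fun i => C (v i) * monomial b 1 + monomial q 1, ?_, fun i => ?_⟩
  · calc monomial μ a + monomial (k • q) (a / k * ∑ i, c i)
        = C (a / k) * ((∑ i, C (c i)) * monomial q 1 ^ k
            + (k : MvPolynomial σ F) * (monomial b 1 * monomial q 1 ^ (k - 1))) := by
          rw [monomial_pow, monomial_pow, monomial_mul, one_pow, one_pow, mul_one, add_comm b,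
            add_tsub_cancel_of_le hle, ← map_sum, ← map_natCast C k, mul_add, ← mul_assoc,
            ← mul_assoc, ← C_mul, ← C_mul, C_mul_monomial, C_mul_monomial, mul_one, mul_one,
            div_mul_cancel₀ a hk, add_comm]
      _ = ∑ i, C (a / k * c i) * (C (v i) * monomial b 1 + monomial q 1) ^ k := by
          rw [← sum_mul_mul_add_pow _ _ hcvC, mul_sum]
          simp only [C_mul, mul_assoc]
  · have hqb : q ≤ b := by
      refine le_tsub_of_add_le_right ?_
      rw [add_comm, ← succ_nsmul, Nat.sub_add_cancel hk0]
      exact smul_floorDiv_le hk0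
    calc _ ≤ k * (C (v i) * monomial b 1 + monomial q 1).totalDegree := totalDegree_pow _ _
      _ ≤ k * b.degree := by
          gcongr
          refine (totalDegree_add _ _).trans (max_le ?_ ?_)
          · rw [C_mul_monomial, mul_one]
            exact totalDegree_monomial_le _ _
          · exact (totalDegree_monomial_le _ _).trans (Finsupp.degree_mono hqb)
      _ ≤ μ.degree + Fintype.card σ * (k - 1) ^ 2 :=
          Finsupp.mul_degree_sub_smul_floorDiv_le k μ
      _ ≤ d + Fintype.card σ * (k - 1) ^ 2 := by gcongr

theorem exists_isScaledPowSum [Fintype σ] {k : ℕ} (hk : (k : F) ≠ 0)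
    (hcard : (k : Cardinal) < Cardinal.mk F) (P : MvPolynomial σ F) :
    ∃ S : Finset (σ →₀ ℕ), (∀ μ ∈ S, μ.degree ≤ P.totalDegree) ∧
      IsScaledPowSum k (k * #S) (P.totalDegree + Fintype.card σ * (k - 1) ^ 2) P := by
  classical
  have hk0 : 0 < k := Nat.pos_of_ne_zero (by rintro rfl; exact hk Nat.cast_zero)
  obtain ⟨c, v, hcv⟩ := exists_sum_mul_pow_succ_eq_ite hcard
  set e := P.totalDegree + Fintype.card σ * (k - 1) ^ 2
  set N := P.support.filter fun μ => ¬ ∃ ν, k • ν = μ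
  set G := fun μ =>
    monomial μ (P.coeff μ) + monomial (k • (μ ⌊/⌋ k)) (P.coeff μ / k * ∑ i, c i)
  have hR := sub_sum_monomial_mem_restrictSupport hk0 (N := N) (filter_subset _ _)
    (fun μ hμ hμN => by simpa [N, hμ] using hμN) fun μ => P.coeff μ / k * ∑ i, c i
  set R := P - ∑ μ ∈ N, G μ
  have hRK := (mem_restrictSupport_iff _).1 hR
  have hdisj : Disjoint N R.support :=
    disjoint_left.2 fun μ hN hμ => (mem_filter.1 hN).2 (hRK hμ).1
  have hG : IsScaledPowSum k (∑ _ ∈ N, k) e (∑ μ ∈ N, G μ) :=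
    IsScaledPowSum.sum N fun μ hμ =>
      isScaledPowSum_monomial_add hcv hk (le_totalDegree (mem_filter.1 hμ).1) _
  have hcount : ∑ _ ∈ N, k + #R.support ≤ k * #(N ∪ R.support) := by
    rw [sum_const, smul_eq_mul, card_union_of_disjoint hdisj]
    nlinarith
  refine ⟨N ∪ R.support, fun μ hμ => ?_, ?_⟩
  · rcases mem_union.1 hμ with h | h
    · exact le_totalDegree (mem_filter.1 h).1
    · exact (hRK h).2
  · have hRsum : IsScaledPowSum k #R.support e R :=
      (IsScaledPowSum.of_mem_restrictSupport hR).mono le_rfl le_self_add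
    simpa [R] using (hG.add hRsum).mono hcount le_rfl

end MvPolynomial

theorem decomposition_low_degree_scaled_general (F : Type*) [Field F] (k : ℕ)
    (hcard : (k : Cardinal) < Cardinal.mk F) (hchar : (k : F) ≠ 0)
    (d : ℕ) (P : MvPolynomial (Fin 2) F) (hP : P.totalDegree = d) :
    ∃ (s : ℕ) (δ : Fin s → F) (Q : Fin s → MvPolynomial (Fin 2) F),
      2 * s ≤ k * (d + 1) * (d + 2) ∧
      P = ∑ i, MvPolynomial.C (δ i) * Q i ^ k ∧
      ∀ i, (Q i ^ k).totalDegree ≤ d + 2 * (k - 1) ^ 2 := by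
  subst hP
  obtain ⟨S, hS, δ, Q, hPQ, hQ⟩ := MvPolynomial.exists_isScaledPowSum hchar hcard P
  rw [Fintype.card_fin] at hQ
  refine ⟨k * #S, δ, Q, ?_, hPQ, hQ⟩
  calc 2 * (k * #S) = k * (2 * #S) := by ring
    _ ≤ k * ((P.totalDegree + 1) * (P.totalDegree + 2)) :=
        Nat.mul_le_mul_left k (Finsupp.two_mul_card_le_of_degree_le S hS)
    _ = k * (P.totalDegree + 1) * (P.totalDegree + 2) := by ring

/-- Every `P ∈ F[x,y]` of degree `d` is a combination `δ₁Q₁^k + ⋯ + δ_sQ_s^k`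
with `deg Qᵢ^k ≤ d + 2(k-1)²` and `s ≤ k(d+1)(d+2)/2`. -/
theorem decomposition_low_degree_scaled (F : Type*) [Field F] (k : ℕ) (hk : 2 ≤ k)
    (hcard : (k : Cardinal) < Cardinal.mk F) (hchar : (k : F) ≠ 0)
    (d : ℕ) (P : MvPolynomial (Fin 2) F) (hP : P.totalDegree = d) :
    ∃ (s : ℕ) (δ : Fin s → F) (Q : Fin s → MvPolynomial (Fin 2) F),
      2 * s ≤ k * (d + 1) * (d + 2) ∧
      P = ∑ i, MvPolynomial.C (δ i) * Q i ^ k ∧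
      ∀ i, (Q i ^ k).totalDegree ≤ d + 2 * (k - 1) ^ 2 :=
  decomposition_low_degree_scaled_general F k hcard hchar d P hP
end

section
/- Let F be a field with more than k elements, whose characteristic does not divide k, in which every element is a sum of w k-th powers. Every P ∈ F[x,y] of degree d admits a decomposition P = Q₁^k + ⋯ + Q_s^k with Qᵢ ∈ F[x,y], deg Qᵢ^k ≤ d + 2(k-1)², and s ≤ k·w·(d+1)(d+2)/2. -/
/-!
Pick `k` distinct `e i ∈ F` with `∑ e i = 0` and weights `c i` whose moments `∑ c i * e i ^ j`,
`j ≤ k`, all vanish except `∑ c i * e i ^ (k - 1) = 1 / k`. The moments `j < k` are a Vandermonde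
system; the moment `j = k` then vanishes too, because the `e i` are the roots of
`∏ (X - e i) = X ^ k + (terms of degree ≤ k - 2)`. Expanding binomially,
`u * v ^ (k - 1) = ∑ c i * (u + e i * v) ^ k`. A monomial `a x^m` is `u * v ^ (k - 1)` for
`u = a x^(m / k + m % k)` and `v = x^(m / k)`, and `k * deg u ≤ |m| + (k - 1)²` per variable.
Writing each `c i` as a sum of `w` `k`-th powers turns every monomial into `k * w` `k`-th powers,
and a bivariate polynomial of degree `d` has at most `(d + 1)(d + 2) / 2` monomials.
-/

open Finset

theorem exists_injective_sum_eq_zero {F : Type*} [Field F] {n : ℕ}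
    (hcard : (n : Cardinal) ≤ Cardinal.mk F) (hn : (n : F) ≠ 0) :
    ∃ e : Fin n → F, Function.Injective e ∧ ∑ i, e i = 0 := by
  obtain ⟨f⟩ : Nonempty (Fin n ↪ F) := Cardinal.lift_mk_le'.mp (by simpa using hcard)
  refine ⟨fun i => f i - (∑ j, f j) / n, fun i j hij => f.injective (sub_left_injective hij), ?_⟩
  rw [sum_sub_distrib, sum_const, card_univ, Fintype.card_fin, nsmul_eq_mul,
    mul_div_cancel₀ _ hn, sub_self]

theorem exists_sum_mul_pow_eq {F : Type*} [Field F] {n : ℕ} {e : Fin n → F}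
    (he : Function.Injective e) (t : ℕ → F) :
    ∃ c : Fin n → F, ∀ j < n, ∑ i, c i * e i ^ j = t j := by
  have hunit : IsUnit (Matrix.vandermonde e) :=
    (Matrix.isUnit_iff_isUnit_det _).mpr (Matrix.det_vandermonde_ne_zero_iff.mpr he).isUnit
  obtain ⟨c, hc⟩ := Matrix.vecMul_surjective_iff_isUnit.mpr hunit (fun j => t j)
  exact ⟨c, fun j hj => by simpa [Matrix.vecMul, dotProduct] using congrFun hc ⟨j, hj⟩⟩

namespace Polynomial

theorem exists_degree_lt_eval_eq_pow {R : Type*} [CommRing R] [Nontrivial R] {n : ℕ}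
    {e : Fin n → R} (he : ∑ i, e i = 0) :
    ∃ q : R[X], q.degree < ↑(n - 1) ∧ ∀ i, q.eval (e i) = e i ^ n := by
  set p : R[X] := ∏ i, (X - C (e i))
  have hmonic : p.Monic := monic_prod_of_monic _ _ fun i _ => monic_X_sub_C _
  have hdeg : p.natDegree = n := by
    simp [p, natDegree_prod_of_monic _ _ fun i _ => monic_X_sub_C (e i)]
  have hnext : p.nextCoeff = 0 := by simp [p, prod_X_sub_C_nextCoeff, he]
  refine ⟨X ^ n - p, (degree_lt_iff_coeff_zero _ _).mpr fun m hm => ?_, fun i => ?_⟩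
  · rw [coeff_sub, coeff_X_pow, sub_eq_zero]
    rcases lt_trichotomy m n with hlt | rfl | hgt
    · obtain rfl : m = n - 1 := by omega
      rw [if_neg (by omega), ← hdeg, ← nextCoeff_of_natDegree_pos (by omega), hnext]
    · rw [if_pos rfl, ← hdeg, hmonic.coeff_natDegree]
    · rw [if_neg hgt.ne', coeff_eq_zero_of_natDegree_lt (hdeg ▸ hgt)]
  · simp [p, eval_prod, prod_eq_zero (mem_univ i)]

theorem sum_mul_eval_eq_zero {R ι : Type*} [CommRing R] [Fintype ι] {c e : ι → R} {N : ℕ}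
    (hc : ∀ m < N, ∑ i, c i * e i ^ m = 0) {q : R[X]} (hq : q.degree < N) :
    ∑ i, c i * q.eval (e i) = 0 := by
  simp_rw [eval_eq_sum, Polynomial.sum, mul_sum]
  rw [sum_comm]
  refine sum_eq_zero fun m hm => ?_
  have hmN : m < N := by exact_mod_cast (le_degree_of_mem_supp m hm).trans_lt hq
  simp_rw [mul_left_comm (c _), ← mul_sum, hc m hmN, mul_zero]

end Polynomial

/-- The moments are chosen so that `∑ i, c i • (u + e i • v) ^ n = u * v ^ (n - 1)`: the value
`1 / n` at `j = n - 1` cancels the binomial coefficient `n.choose 1`. -/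
def IsPolarizationWeights {F ι : Type*} [Field F] [Fintype ι] (n : ℕ) (c e : ι → F) : Prop :=
  ∀ j ≤ n, ∑ i, c i * e i ^ j = if j = n - 1 then (n : F)⁻¹ else 0

theorem exists_isPolarizationWeights {F : Type*} [Field F] {n : ℕ}
    (hcard : (n : Cardinal) ≤ Cardinal.mk F) (hn : (n : F) ≠ 0) :
    ∃ c e : Fin n → F, IsPolarizationWeights n c e := by
  obtain ⟨e, he, hsum⟩ := exists_injective_sum_eq_zero hcard hn
  obtain ⟨c, hc⟩ := exists_sum_mul_pow_eq he fun j => if j = n - 1 then (n : F)⁻¹ else 0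
  refine ⟨c, e, fun j hj => (Nat.lt_or_eq_of_le hj).elim (hc j) ?_⟩
  rintro rfl
  have hj0 : j ≠ 0 := by rintro rfl; exact hn Nat.cast_zero
  obtain ⟨q, hq, hqe⟩ := Polynomial.exists_degree_lt_eval_eq_pow hsum
  have hlow : ∀ m < j - 1, ∑ i, c i * e i ^ m = 0 := fun m hm =>
    (hc m (by omega)).trans (if_neg (by omega))
  rw [if_neg (by omega), ← Polynomial.sum_mul_eval_eq_zero hlow hq]
  simp_rw [hqe]

theorem IsPolarizationWeights.mul_pow_pred_eq_sum {F R ι : Type*} [Field F] [CommRing R]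
    [Algebra F R] [Fintype ι] {n : ℕ} {c e : ι → F} (hce : IsPolarizationWeights n c e)
    (hn : (n : F) ≠ 0) (u v : R) :
    u * v ^ (n - 1) = ∑ i, c i • (u + e i • v) ^ n := by
  have hn0 : n ≠ 0 := by rintro rfl; exact hn Nat.cast_zero
  have expand : ∑ i, c i • (u + e i • v) ^ n = ∑ m ∈ range (n + 1),
      (∑ i, c i * e i ^ (n - m)) • (u ^ m * v ^ (n - m) * (n.choose m : R)) := by
    simp_rw [add_pow, smul_pow, smul_sum, sum_smul]
    rw [sum_comm]
    refine sum_congr rfl fun m _ => sum_congr rfl fun i _ => ?_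
    rw [mul_smul, mul_smul_comm, smul_mul_assoc]
  rw [expand, sum_eq_single_of_mem 1 (mem_range.mpr (by omega))]
  · rw [hce _ (by omega), if_pos rfl, pow_one, Nat.choose_one_right, mul_comm _ (n : R),
      ← nsmul_eq_mul, ← Nat.cast_smul_eq_nsmul F, inv_smul_smul₀ hn]
  · intro m hm hm1
    have := mem_range.mp hm
    rw [hce _ (by omega), if_neg (by omega), zero_smul]

theorem Nat.mul_div_add_mod_le (x k : ℕ) : k * (x / k + x % k) ≤ x + (k - 1) ^ 2 := by
  rcases Nat.eq_zero_or_pos k with rfl | hk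
  · simp
  have hdiv := Nat.div_add_mod x k
  have hmod : x % k ≤ k - 1 := Nat.le_sub_one_of_lt (Nat.mod_lt x hk)
  have : (k - 1) * (x % k) ≤ (k - 1) ^ 2 := by rw [sq]; exact Nat.mul_le_mul_left _ hmod
  obtain ⟨j, rfl⟩ : ∃ j, k = j + 1 := ⟨k - 1, by omega⟩
  simp only [Nat.add_sub_cancel] at this ⊢
  nlinarith

namespace Finsupp

variable {σ : Type*}

noncomputable def divNat (m : σ →₀ ℕ) (k : ℕ) : σ →₀ ℕ := m.mapRange (· / k) (Nat.zero_div k)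

noncomputable def modNat (m : σ →₀ ℕ) (k : ℕ) : σ →₀ ℕ := m.mapRange (· % k) (Nat.zero_mod k)

theorem divNat_add_modNat_add_nsmul (m : σ →₀ ℕ) (k : ℕ) :
    m.divNat k + m.modNat k + (k - 1) • m.divNat k = m := by
  ext i
  simp only [divNat, modNat, coe_add, coe_smul, Pi.add_apply, Pi.smul_apply, mapRange_apply,
    smul_eq_mul]
  have := Nat.div_add_mod (m i) k
  rcases Nat.eq_zero_or_pos k with rfl | hk
  · simp
  obtain ⟨j, rfl⟩ : ∃ j, k = j + 1 := ⟨k - 1, by omega⟩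
  simp only [Nat.add_sub_cancel]
  nlinarith

theorem mul_degree_divNat_add_modNat_le [Fintype σ] (m : σ →₀ ℕ) (k : ℕ) :
    k * (m.divNat k + m.modNat k).degree ≤ m.degree + Fintype.card σ * (k - 1) ^ 2 := by
  calc k * (m.divNat k + m.modNat k).degree = ∑ i, k * (m i / k + m i % k) := by
        simp [degree_eq_sum, divNat, modNat, Finset.mul_sum]
    _ ≤ ∑ i, (m i + (k - 1) ^ 2) := Finset.sum_le_sum fun i _ => Nat.mul_div_add_mod_le (m i) k
    _ = m.degree + Fintype.card σ * (k - 1) ^ 2 := by simp [degree_eq_sum, sum_add_distrib]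

end Finsupp

namespace MvPolynomial

open Finsupp

variable {σ F : Type*} [Field F] {n w : ℕ}

theorem monomial_eq_mul_pow_pred {R : Type*} [CommSemiring R] (m : σ →₀ ℕ) (k : ℕ) (a : R) :
    monomial m a = monomial (m.divNat k + m.modNat k) a * monomial (m.divNat k) 1 ^ (k - 1) := by
  rw [monomial_pow, monomial_mul, one_pow, mul_one, divNat_add_modNat_add_nsmul]

theorem exists_monomial_eq_sum_pow [Fintype σ] {ι : Type*} [Fintype ι] {c e : ι → F}
    (hce : IsPolarizationWeights n c e) (hn : (n : F) ≠ 0)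
    (hW : ∀ a : F, ∃ b : Fin w → F, a = ∑ i, b i ^ n) (m : σ →₀ ℕ) (a : F) :
    ∃ Q : ι × Fin w → MvPolynomial σ F, monomial m a = ∑ t, Q t ^ n ∧
      ∀ t, (Q t ^ n).totalDegree ≤ m.degree + Fintype.card σ * (n - 1) ^ 2 := by
  set A : MvPolynomial σ F := monomial (m.divNat n + m.modNat n) a
  set B : MvPolynomial σ F := monomial (m.divNat n) 1
  choose b hb using fun i => hW (c i)
  refine ⟨fun t => b t.1 t.2 • (A + e t.1 • B), ?_, fun t => ?_⟩
  · rw [monomial_eq_mul_pow_pred m n, hce.mul_pow_pred_eq_sum hn, Fintype.sum_prod_type]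
    refine Finset.sum_congr rfl fun i _ => ?_
    rw [hb i, Finset.sum_smul]
    simp_rw [smul_pow]
    rfl
  · have hA : A.totalDegree ≤ (m.divNat n + m.modNat n).degree := totalDegree_monomial_le _ _
    have hB : B.totalDegree ≤ (m.divNat n + m.modNat n).degree :=
      (totalDegree_monomial_le _ _).trans (Finsupp.degree_mono le_self_add)
    calc ((b t.1 t.2 • (A + e t.1 • B)) ^ n).totalDegree
        ≤ n * (A + e t.1 • B).totalDegree :=
          (totalDegree_pow _ _).trans (Nat.mul_le_mul_left _ (totalDegree_smul_le _ _))
      _ ≤ n * (m.divNat n + m.modNat n).degree :=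
          Nat.mul_le_mul_left _ ((totalDegree_add _ _).trans
            (max_le hA ((totalDegree_smul_le _ _).trans hB)))
      _ ≤ m.degree + Fintype.card σ * (n - 1) ^ 2 := mul_degree_divNat_add_modNat_le m n

theorem exists_eq_sum_pow_totalDegree_le [Fintype σ] (hcard : (n : Cardinal) ≤ Cardinal.mk F)
    (hn : (n : F) ≠ 0) (hW : ∀ a : F, ∃ b : Fin w → F, a = ∑ i, b i ^ n)
    (P : MvPolynomial σ F) :
    ∃ Q : P.support × Fin n × Fin w → MvPolynomial σ F, P = ∑ t, Q t ^ n ∧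
      ∀ t, (Q t ^ n).totalDegree ≤ P.totalDegree + Fintype.card σ * (n - 1) ^ 2 := by
  obtain ⟨c, e, hce⟩ := exists_isPolarizationWeights hcard hn
  choose Q hQ hdeg using fun m : P.support => exists_monomial_eq_sum_pow hce hn hW m.1 (P.coeff m)
  refine ⟨fun t => Q t.1 t.2, ?_, fun t => (hdeg t.1 t.2).trans ?_⟩
  · calc P = ∑ m ∈ P.support, monomial m (P.coeff m) := (support_sum_monomial_coeff P).symm
      _ = ∑ m : P.support, monomial m.1 (P.coeff m) := (Finset.sum_coe_sort _ _).symm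
      _ = _ := by rw [Fintype.sum_prod_type]; exact Finset.sum_congr rfl fun m _ => hQ m
  · exact Nat.add_le_add_right (le_totalDegree t.1.2) _

theorem two_mul_card_support_le {R : Type*} [CommSemiring R]
    (P : MvPolynomial (Fin 2) R) {d : ℕ} (hP : P.totalDegree ≤ d) :
    2 * #P.support ≤ (d + 1) * (d + 2) := by
  have hmaps : ∀ m ∈ P.support,
      (⟨m 0 + m 1, m 0⟩ : Σ _ : ℕ, ℕ) ∈ (range (d + 1)).sigma fun s => range (s + 1) := by
    intro m hm
    have : m 0 + m 1 ≤ d := by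
      simpa [Finsupp.sum_fintype, Fin.sum_univ_two] using (le_totalDegree hm).trans hP
    simp only [mem_sigma, mem_range]
    omega
  have hinj : Set.InjOn (fun m : Fin 2 →₀ ℕ => (⟨m 0 + m 1, m 0⟩ : Σ _ : ℕ, ℕ)) P.support := by
    intro m _ m' _ h
    simp only [Sigma.mk.injEq, heq_eq_eq] at h
    ext i
    fin_cases i <;> simp <;> omega
  have hgauss : 2 * ∑ s ∈ range (d + 1), (s + 1) = (d + 1) * (d + 2) := by
    have := sum_range_id_mul_two (d + 2)
    rw [sum_range_succ', add_zero, show d + 2 - 1 = d + 1 from rfl] at this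
    linarith
  calc 2 * #P.support ≤ 2 * #((range (d + 1)).sigma fun s => range (s + 1)) :=
        Nat.mul_le_mul_left _ (card_le_card_of_injOn _ hmaps hinj)
    _ = (d + 1) * (d + 2) := by rw [card_sigma]; simpa using hgauss

end MvPolynomial

theorem decomposition_low_degree_general (F : Type*) [Field F] (k w : ℕ)
    (hcard : (k : Cardinal) < Cardinal.mk F) (hchar : (k : F) ≠ 0)
    (hW : ∀ a : F, ∃ b : Fin w → F, a = ∑ i, b i ^ k)
    (d : ℕ) (P : MvPolynomial (Fin 2) F) (hP : P.totalDegree = d) :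
    ∃ (s : ℕ) (Q : Fin s → MvPolynomial (Fin 2) F),
      2 * s ≤ k * w * (d + 1) * (d + 2) ∧
      P = ∑ i, Q i ^ k ∧
      ∀ i, (Q i ^ k).totalDegree ≤ d + 2 * (k - 1) ^ 2 := by
  obtain ⟨Q, hPQ, hdeg⟩ := MvPolynomial.exists_eq_sum_pow_totalDegree_le hcard.le hchar hW P
  let E := Fintype.equivFin (P.support × Fin k × Fin w)
  refine ⟨_, Q ∘ E.symm, ?_, hPQ.trans (E.symm.sum_comp fun t => Q t ^ k).symm, fun i => ?_⟩
  · have hsupp := MvPolynomial.two_mul_card_support_le P hP.le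
    simp only [Fintype.card_prod, Fintype.card_coe, Fintype.card_fin]
    calc 2 * (#P.support * (k * w)) = 2 * #P.support * (k * w) := by ring
      _ ≤ (d + 1) * (d + 2) * (k * w) := Nat.mul_le_mul_right _ hsupp
      _ = k * w * (d + 1) * (d + 2) := by ring
  · simpa [hP] using hdeg (E.symm i)

/-- Every `P ∈ F[x,y]` of degree `d` is a sum of `s ≤ k·w·(d+1)(d+2)/2` `k`-th
powers with `deg Qᵢ^k ≤ d + 2(k-1)²`. -/
theorem decomposition_low_degree (F : Type*) [Field F] (k w : ℕ) (hk : 2 ≤ k)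
    (hw : 1 ≤ w) (hcard : (k : Cardinal) < Cardinal.mk F) (hchar : (k : F) ≠ 0)
    (hW : ∀ a : F, ∃ b : Fin w → F, a = ∑ i, b i ^ k)
    (d : ℕ) (P : MvPolynomial (Fin 2) F) (hP : P.totalDegree = d) :
    ∃ (s : ℕ) (Q : Fin s → MvPolynomial (Fin 2) F),
      2 * s ≤ k * w * (d + 1) * (d + 2) ∧
      P = ∑ i, Q i ^ k ∧
      ∀ i, (Q i ^ k).totalDegree ≤ d + 2 * (k - 1) ^ 2 :=
  decomposition_low_degree_general F k w hcard hchar hW d P hP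
end

section
/- Approximate k-th root in two variables: Let F be a field whose characteristic does not divide k, and let m, n, d = m + n be positive integers divisible by k. Let P ∈ F[x,y] with deg P ≤ d and deg_x P < m. Then there exists a unique polynomial Q ∈ F[x,y], monic in x with deg_x Q = m/k, deg Q ≤ d/k, such that P + x^m y^n − Q^k has no monomial x^i y^j with i ≥ m − m/k and j ≥ n − n/k. -/
/-!
Work in `F[y][x]` and write `Q = ∑ₐ Qₐ(y) xᵃ` with `Q_p = y^q`, where `p = m/k`, `q = n/k`. If two
such polynomials agree above `xᵃ` (`a < p`), their `k`-th powers agree above `x^((k-1)p + a)`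
and differ there by `k y^((k-1)q)` times the difference of their `xᵃ`-coefficients, because
`g^k - f^k = (g - f) ∑ gⁱ f^(k-1-i)`. So, row by row from the top, the condition on the
monomials `x^((k-1)p + a) y^j`, `j ≥ (k-1)q`, determines `Qₐ` (as `k` is invertible), and the
resulting `Qₐ` has degree at most `q + p - a`. The rows `i ≥ kp` hold automatically since
`deg_x P < kp` and `x^m y^n = (x^p y^q)^k`.
-/

namespace Polynomial

section CommRing

variable {R : Type*} [CommRing R]

theorem coeff_divByMonic_X_pow (f : R[X]) (e j : ℕ) :
    (f /ₘ X ^ e).coeff j = f.coeff (j + e) := by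
  nontriviality R
  have hmod : (f %ₘ X ^ e).coeff (j + e) = 0 :=
    coeff_eq_zero_of_degree_lt <| (degree_modByMonic_lt f (monic_X_pow e)).trans_le
      (by rw [degree_X_pow]; exact_mod_cast Nat.le_add_left e j)
  conv_rhs => rw [← modByMonic_add_div f (X ^ e)]
  rw [coeff_add, hmod, zero_add, coeff_X_pow_mul]

theorem coeff_X_pow_mul_divByMonic_X_pow (f : R[X]) {e j : ℕ} (hj : e ≤ j) :
    (X ^ e * (f /ₘ X ^ e)).coeff j = f.coeff j := by
  rw [coeff_X_pow_mul', if_pos hj, coeff_divByMonic_X_pow, Nat.sub_add_cancel hj]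

variable {f g : R[X]} {p : ℕ}

theorem natDegree_geom_sum₂_le (hf : f.natDegree ≤ p) (hg : g.natDegree ≤ p) (k : ℕ) :
    (∑ i ∈ Finset.range k, g ^ i * f ^ (k - 1 - i)).natDegree ≤ (k - 1) * p := by
  refine natDegree_sum_le_of_forall_le _ _ fun i hi => ?_
  have hik : i + (k - 1 - i) = k - 1 := by have := Finset.mem_range.mp hi; omega
  calc (g ^ i * f ^ (k - 1 - i)).natDegree ≤ i * p + (k - 1 - i) * p :=
        natDegree_mul_le_of_le (natDegree_pow_le_of_le i hg) (natDegree_pow_le_of_le _ hf)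
    _ = (k - 1) * p := by rw [← add_mul, hik]

theorem coeff_geom_sum₂ (hf : f.natDegree ≤ p) (hg : g.natDegree ≤ p)
    (hfg : g.coeff p = f.coeff p) (k : ℕ) :
    (∑ i ∈ Finset.range k, g ^ i * f ^ (k - 1 - i)).coeff ((k - 1) * p) =
      k * f.coeff p ^ (k - 1) := by
  rw [finsetSum_coeff, Finset.sum_congr rfl (g := fun _ => f.coeff p ^ (k - 1)),
    Finset.sum_const, Finset.card_range, nsmul_eq_mul]
  intro i hi
  have hik : i + (k - 1 - i) = k - 1 := by have := Finset.mem_range.mp hi; omega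
  rw [show (k - 1) * p = i * p + (k - 1 - i) * p by rw [← add_mul, hik],
    coeff_mul_add_eq_of_natDegree_le (natDegree_pow_le_of_le i hg) (natDegree_pow_le_of_le _ hf),
    coeff_pow_of_natDegree_le hg, coeff_pow_of_natDegree_le hf, hfg, ← pow_add, hik]

theorem natDegree_pow_sub_pow_le (hf : f.natDegree ≤ p) (hg : g.natDegree ≤ p) {r : ℕ}
    (hr : (g - f).natDegree ≤ r) (k : ℕ) :
    (g ^ k - f ^ k).natDegree ≤ (k - 1) * p + r := by
  rw [← geom_sum₂_mul]
  exact natDegree_mul_le_of_le (natDegree_geom_sum₂_le hf hg k) hr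

theorem coeff_pow_sub_pow (hf : f.natDegree ≤ p) (hg : g.natDegree ≤ p) {r : ℕ}
    (hr : (g - f).natDegree ≤ r) (hrp : r < p) (k : ℕ) :
    (g ^ k - f ^ k).coeff ((k - 1) * p + r) = k * f.coeff p ^ (k - 1) * (g - f).coeff r := by
  have hfg : g.coeff p = f.coeff p := by
    rw [← sub_eq_zero, ← coeff_sub, coeff_eq_zero_of_natDegree_lt (hr.trans_lt hrp)]
  rw [← geom_sum₂_mul, coeff_mul_add_eq_of_natDegree_le (natDegree_geom_sum₂_le hf hg k) hr,
    coeff_geom_sum₂ hf hg hfg]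

end CommRing

section TotalDegree

variable {R : Type*} [Semiring R]

/- The outer variable of `R[X][X]` plays `x` and the inner one `y`: `(f.coeff i).coeff j` is the
coefficient of `xⁱ yʲ`. -/
def TotalDegreeLE (D : ℕ) (f : R[X][X]) : Prop :=
  ∀ i j, D < i + j → (f.coeff i).coeff j = 0

def CornerVanishes (a b : ℕ) (f : R[X][X]) : Prop :=
  ∀ i j, a ≤ i → b ≤ j → (f.coeff i).coeff j = 0

theorem totalDegreeLE_one : (1 : R[X][X]).TotalDegreeLE 0 := fun i j h => by
  rw [coeff_one]
  split_ifs with hi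
  · rw [coeff_one, if_neg (by omega)]
  · rfl

theorem totalDegreeLE_C_mul_X_pow {c : R[X]} {a D : ℕ} (hc : ∀ j, D < a + j → c.coeff j = 0) :
    (C c * X ^ a).TotalDegreeLE D := fun i j h => by
  rw [coeff_C_mul_X_pow]
  split_ifs with hi
  · exact hc j (hi ▸ h)
  · rfl

theorem totalDegreeLE_C_X_pow_mul_X_pow (p q : ℕ) :
    (C (X ^ q) * X ^ p : R[X][X]).TotalDegreeLE (p + q) :=
  totalDegreeLE_C_mul_X_pow fun j hj => by rw [coeff_X_pow, if_neg (by omega)]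

namespace TotalDegreeLE

variable {D E : ℕ} {f g : R[X][X]}

theorem add (hf : f.TotalDegreeLE D) (hg : g.TotalDegreeLE D) : (f + g).TotalDegreeLE D :=
  fun i j h => by rw [coeff_add, coeff_add, hf i j h, hg i j h, add_zero]

theorem sub {R : Type*} [Ring R] {f g : R[X][X]} (hf : f.TotalDegreeLE D)
    (hg : g.TotalDegreeLE D) : (f - g).TotalDegreeLE D :=
  fun i j h => by rw [coeff_sub, coeff_sub, hf i j h, hg i j h, sub_zero]

theorem mul (hf : f.TotalDegreeLE D) (hg : g.TotalDegreeLE E) :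
    (f * g).TotalDegreeLE (D + E) := by
  intro i j h
  rw [coeff_mul, finsetSum_coeff]
  refine Finset.sum_eq_zero fun a ha => ?_
  rw [coeff_mul]
  refine Finset.sum_eq_zero fun b hb => ?_
  rw [Finset.HasAntidiagonal.mem_antidiagonal] at ha hb
  rcases (by omega : D < a.1 + b.1 ∨ E < a.2 + b.2) with h | h
  · rw [hf _ _ h, zero_mul]
  · rw [hg _ _ h, mul_zero]

theorem pow (hf : f.TotalDegreeLE D) (k : ℕ) : (f ^ k).TotalDegreeLE (k * D) := by
  induction k with
  | zero => simpa using totalDegreeLE_one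
  | succ k ih => simpa [pow_succ, add_mul] using ih.mul hf

end TotalDegreeLE

end TotalDegree

section ApproxRoot

variable {F : Type*} [Field F] {k p q t : ℕ} {A Q : F[X][X]}

structure IsApproxRoot (k p q t : ℕ) (A Q : F[X][X]) : Prop where
  natDegree_le : Q.natDegree ≤ p
  coeff_eq : Q.coeff p = X ^ q
  totalDegreeLE : Q.TotalDegreeLE (p + q)
  cornerVanishes : CornerVanishes (k * p - t) ((k - 1) * q) (A - Q ^ k)

theorem isApproxRoot_C_X_pow_mul_X_pow {P : F[X][X]} (hP : P.natDegree < k * p) :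
    IsApproxRoot k p q 0 (P + (C (X ^ q) * X ^ p) ^ k) (C (X ^ q) * X ^ p) where
  natDegree_le := natDegree_C_mul_X_pow_le _ _
  coeff_eq := by rw [coeff_C_mul_X_pow, if_pos rfl]
  totalDegreeLE := totalDegreeLE_C_X_pow_mul_X_pow p q
  cornerVanishes i j hi _ := by
    rw [add_sub_cancel_right, coeff_eq_zero_of_natDegree_lt (hP.trans_le (by omega)), coeff_zero]

/- Changing `Q` below row `p - (t + 1)` leaves the rows `i > k * p - (t + 1)` of `Q ^ k` alone and
changes row `k * p - (t + 1)` by `k * y ^ ((k - 1) * q)` times the change in row `p - (t + 1)`. -/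
theorem IsApproxRoot.cornerVanishes_of_sub (hk : k ≠ 0) (h : IsApproxRoot k p q t A Q)
    (ht : t < p) {Q' : F[X][X]} (hQ' : Q'.natDegree ≤ p)
    (hΔ : (Q' - Q).natDegree ≤ p - (t + 1))
    (hrow : ∀ j, (k - 1) * q ≤ j →
      ((k : F[X]) * X ^ ((k - 1) * q) * (Q' - Q).coeff (p - (t + 1))).coeff j =
        ((A - Q ^ k).coeff (k * p - (t + 1))).coeff j) :
    CornerVanishes (k * p - (t + 1)) ((k - 1) * q) (A - Q' ^ k) := by
  have hkp : (k - 1) * p + (p - (t + 1)) = k * p - (t + 1) := by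
    have := Nat.le_mul_of_pos_left p (Nat.pos_of_ne_zero hk)
    rw [Nat.sub_one_mul]
    omega
  intro i j hi hj
  rw [show A - Q' ^ k = (A - Q ^ k) - (Q' ^ k - Q ^ k) by ring, coeff_sub, coeff_sub]
  rcases hi.eq_or_lt with rfl | hlt
  · rw [← hkp, coeff_pow_sub_pow h.natDegree_le hQ' hΔ (by omega), h.coeff_eq, ← pow_mul,
      mul_comm q, hkp, hrow j hj, sub_self]
  · rw [coeff_eq_zero_of_natDegree_lt
      ((natDegree_pow_sub_pow_le h.natDegree_le hQ' hΔ k).trans_lt (hkp ▸ hlt)), coeff_zero,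
      sub_zero]
    exact h.cornerVanishes i j (by omega) hj

theorem IsApproxRoot.exists_succ (hk : (k : F) ≠ 0) (hA : A.TotalDegreeLE (k * (p + q)))
    (h : IsApproxRoot k p q t A Q) (ht : t < p) : ∃ Q', IsApproxRoot k p q (t + 1) A Q' := by
  have hk0 : k ≠ 0 := by rintro rfl; exact hk Nat.cast_zero
  have hkp : p ≤ k * p := Nat.le_mul_of_pos_left p (Nat.pos_of_ne_zero hk0)
  have hkq : (k - 1) * q + q = k * q := by
    rw [Nat.sub_one_mul]
    exact Nat.sub_add_cancel (Nat.le_mul_of_pos_left q (Nat.pos_of_ne_zero hk0))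
  set a := p - (t + 1)
  set e := (k - 1) * q
  set f := (A - Q ^ k).coeff (k * p - (t + 1)) with hf
  -- `k * y ^ e * c` agrees with `f` in the degrees `≥ e`
  set c := C (k : F)⁻¹ * (f /ₘ X ^ e) with hc
  have hΔ : Q + C c * X ^ a - Q = C c * X ^ a := add_sub_cancel_left _ _
  have hQ' : (Q + C c * X ^ a).natDegree ≤ p :=
    natDegree_add_le_of_degree_le h.natDegree_le ((natDegree_C_mul_X_pow_le c a).trans (by omega))
  have hres : (A - Q ^ k).TotalDegreeLE (k * (p + q)) := hA.sub (h.totalDegreeLE.pow k)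
  refine ⟨Q + C c * X ^ a, hQ', ?_, ?_, ?_⟩
  · rw [coeff_add, coeff_C_mul_X_pow, if_neg (by omega), add_zero, h.coeff_eq]
  · refine h.totalDegreeLE.add (totalDegreeLE_C_mul_X_pow fun j hj => ?_)
    rw [hc, coeff_C_mul, coeff_divByMonic_X_pow, hf, hres _ _ (by rw [mul_add]; omega), mul_zero]
  · refine h.cornerVanishes_of_sub hk0 ht hQ' (by rw [hΔ]; exact natDegree_C_mul_X_pow_le c a)
      fun j hj => ?_
    have hkinv : C (k : F) * C (k : F)⁻¹ = 1 := by rw [← C_mul, mul_inv_cancel₀ hk, C_1]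
    rw [hΔ, coeff_C_mul_X_pow, if_pos rfl, hc, ← C_eq_natCast,
      show C (k : F) * X ^ e * (C (k : F)⁻¹ * (f /ₘ X ^ e)) = X ^ e * (f /ₘ X ^ e) by
        linear_combination (X ^ e * (f /ₘ X ^ e)) * hkinv,
      coeff_X_pow_mul_divByMonic_X_pow f hj]

theorem IsApproxRoot.exists_of_le (hk : (k : F) ≠ 0) {Q₀ : F[X][X]}
    (hA : A.TotalDegreeLE (k * (p + q))) (h₀ : IsApproxRoot k p q 0 A Q₀) :
    ∀ t ≤ p, ∃ Q, IsApproxRoot k p q t A Q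
  | 0, _ => ⟨Q₀, h₀⟩
  | t + 1, ht => by
    obtain ⟨Q, hQ⟩ := IsApproxRoot.exists_of_le hk hA h₀ t (by omega)
    exact hQ.exists_succ hk hA (by omega)

theorem eq_of_cornerVanishes (hk : (k : F) ≠ 0) {Q' : F[X][X]}
    (hQ : Q.natDegree ≤ p) (hQ' : Q'.natDegree ≤ p) (hc : Q.coeff p = X ^ q)
    (hc' : Q'.coeff p = X ^ q) (h : CornerVanishes ((k - 1) * p) ((k - 1) * q) (A - Q ^ k))
    (h' : CornerVanishes ((k - 1) * p) ((k - 1) * q) (A - Q' ^ k)) : Q = Q' := by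
  by_contra hne
  set Δ := Q' - Q with hΔ
  have hΔ0 : Δ ≠ 0 := sub_ne_zero.mpr (Ne.symm hne)
  have hΔp : Δ.coeff p = 0 := by rw [hΔ, coeff_sub, hc, hc', sub_self]
  have hrp : Δ.natDegree < p := by
    have hle : Δ.natDegree ≤ p := (natDegree_sub_le_of_le hQ' hQ).trans (max_self p).le
    refine hle.lt_of_ne fun heq => hΔ0 (leadingCoeff_eq_zero.mp ?_)
    rwa [leadingCoeff, heq]
  have hlead : Δ.leadingCoeff = 0 := by
    ext j
    have hrow := coeff_pow_sub_pow hQ hQ' le_rfl hrp k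
    rw [hc, ← pow_mul, mul_comm q] at hrow
    have hvanish :
        ((Q' ^ k - Q ^ k).coeff ((k - 1) * p + Δ.natDegree)).coeff (j + (k - 1) * q) = 0 := by
      rw [show Q' ^ k - Q ^ k = (A - Q ^ k) - (A - Q' ^ k) by ring, coeff_sub, coeff_sub,
        h _ _ (Nat.le_add_right _ _) (Nat.le_add_left _ _),
        h' _ _ (Nat.le_add_right _ _) (Nat.le_add_left _ _), sub_zero]
    rw [hrow, ← C_eq_natCast, mul_assoc, coeff_C_mul, coeff_X_pow_mul] at hvanish
    simpa [hk] using hvanish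
  exact hΔ0 (leadingCoeff_eq_zero.mp hlead)

theorem existsUnique_approxRoot (hk : (k : F) ≠ 0) {P : F[X][X]} (hPx : P.natDegree < k * p)
    (hPd : P.TotalDegreeLE (k * (p + q))) :
    ∃! Q : F[X][X], Q.TotalDegreeLE (p + q) ∧ Q.natDegree = p ∧ Q.coeff p = X ^ q ∧
      CornerVanishes ((k - 1) * p) ((k - 1) * q) (P + (C (X ^ q) * X ^ p) ^ k - Q ^ k) := by
  have hA := hPd.add ((totalDegreeLE_C_X_pow_mul_X_pow p q).pow k)
  obtain ⟨Q, hQ⟩ := IsApproxRoot.exists_of_le hk hA (isApproxRoot_C_X_pow_mul_X_pow hPx) p le_rfl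
  have hcorner := hQ.cornerVanishes
  rw [← Nat.sub_one_mul] at hcorner
  refine ⟨Q, ⟨hQ.totalDegreeLE, ?_, hQ.coeff_eq, hcorner⟩, fun Q' ⟨_, hQ'p, hQ'c, hQ'⟩ => ?_⟩
  · refine hQ.natDegree_le.antisymm (le_natDegree_of_ne_zero ?_)
    rw [hQ.coeff_eq]
    exact pow_ne_zero q X_ne_zero
  · exact (eq_of_cornerVanishes hk hQ.natDegree_le hQ'p.le hQ.coeff_eq hQ'c hcorner hQ').symm

end ApproxRoot

end Polynomial

namespace MvPolynomial

open Polynomial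

variable (R : Type*) [CommSemiring R]

noncomputable def finTwoEquiv : MvPolynomial (Fin 2) R ≃ₐ[R] R[X][X] :=
  (Polynomial.Bivariate.equivMvPolynomial R).symm.trans Polynomial.Bivariate.swap

variable {R}

@[simp] theorem finTwoEquiv_X_zero : finTwoEquiv R (X 0) = Polynomial.X := by
  simp [finTwoEquiv, Bivariate.swap_X]

@[simp] theorem finTwoEquiv_X_one : finTwoEquiv R (X 1) = Polynomial.C Polynomial.X := by
  simp [finTwoEquiv, Bivariate.swap_Y]

theorem finTwoEquiv_monomial (s : Fin 2 →₀ ℕ) (a : R) :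
    finTwoEquiv R (monomial s a) = Polynomial.monomial (s 0) (Polynomial.monomial (s 1) a) := by
  rw [monomial_eq, Finsupp.prod_fintype _ _ (by simp), Fin.prod_univ_two]
  simp [finTwoEquiv, Bivariate.swap_X, Bivariate.swap_Y, Bivariate.swap_C_C,
    ← Polynomial.C_mul_X_pow_eq_monomial]
  ring

theorem eq_single_zero_add_single_one_iff (s : Fin 2 →₀ ℕ) (i j : ℕ) :
    s = Finsupp.single 0 i + Finsupp.single 1 j ↔ s 0 = i ∧ s 1 = j := by
  constructor
  · rintro rfl; simp
  · rintro ⟨rfl, rfl⟩; ext a; fin_cases a <;> simp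

theorem finTwoEquiv_coeff_coeff (f : MvPolynomial (Fin 2) R) (i j : ℕ) :
    ((finTwoEquiv R f).coeff i).coeff j = f.coeff (Finsupp.single 0 i + Finsupp.single 1 j) := by
  induction f using MvPolynomial.induction_on' with
  | monomial s a =>
    simp only [finTwoEquiv_monomial, Polynomial.coeff_monomial, coeff_monomial,
      eq_single_zero_add_single_one_iff]
    split_ifs <;> simp_all [Polynomial.coeff_monomial]
  | add f g hf hg => simp [hf, hg]

theorem forall_mem_support_iff_finTwoEquiv (f : MvPolynomial (Fin 2) R) (φ : ℕ → ℕ → Prop) :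
    (∀ s ∈ f.support, φ (s 0) (s 1)) ↔
      ∀ i j, ¬ φ i j → ((finTwoEquiv R f).coeff i).coeff j = 0 := by
  simp only [finTwoEquiv_coeff_coeff]
  constructor
  · intro h i j hφ
    by_contra hne
    exact hφ (by simpa using h _ (mem_support_iff.mpr hne))
  · intro h s hs
    by_contra hφ
    have hs' := (eq_single_zero_add_single_one_iff s _ _).mpr ⟨rfl, rfl⟩
    exact mem_support_iff.mp hs (hs' ▸ h _ _ hφ)

theorem totalDegree_le_iff_totalDegreeLE (f : MvPolynomial (Fin 2) R) (D : ℕ) :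
    f.totalDegree ≤ D ↔ (finTwoEquiv R f).TotalDegreeLE D := by
  have hsum (s : Fin 2 →₀ ℕ) : (s.sum fun _ e => e) = s 0 + s 1 := by
    rw [Finsupp.sum_fintype _ _ (by simp), Fin.sum_univ_two]
  simp only [totalDegree, Finset.sup_le_iff, hsum]
  rw [forall_mem_support_iff_finTwoEquiv f (fun i j => i + j ≤ D)]
  simp only [not_le, Polynomial.TotalDegreeLE]

theorem degreeOf_zero_eq_natDegree (f : MvPolynomial (Fin 2) R) :
    f.degreeOf 0 = (finTwoEquiv R f).natDegree := eq_of_forall_ge_iff fun d => by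
  rw [degreeOf_le_iff, forall_mem_support_iff_finTwoEquiv f (fun i _ => i ≤ d),
    Polynomial.natDegree_le_iff_coeff_eq_zero]
  simp only [not_le, Polynomial.ext_iff, Polynomial.coeff_zero]
  exact ⟨fun h i hi j => h i j hi, fun h i j hi => h i hi j⟩

end MvPolynomial

open MvPolynomial

theorem approximate_root_general (F : Type*) [Field F] (k m n d : ℕ)
    (hchar : (k : F) ≠ 0) (hd : d = m + n)
    (hkm : k ∣ m) (hkn : k ∣ n)
    (P : MvPolynomial (Fin 2) F) (hPdeg : P.totalDegree ≤ d)
    (hPx : MvPolynomial.degreeOf 0 P < m) :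
    ∃! Q : MvPolynomial (Fin 2) F,
      Q.totalDegree ≤ d / k ∧
      MvPolynomial.degreeOf 0 Q = m / k ∧
      (∀ j : ℕ, MvPolynomial.coeff (Finsupp.single 0 (m / k) + Finsupp.single 1 j) Q =
        if j = n / k then 1 else 0) ∧
      (∀ i j : ℕ, m - m / k ≤ i → n - n / k ≤ j →
        MvPolynomial.coeff (Finsupp.single 0 i + Finsupp.single 1 j)
          (P + X 0 ^ m * X 1 ^ n - Q ^ k) = 0) := by
  obtain ⟨p, rfl⟩ := hkm
  obtain ⟨q, rfl⟩ := hkn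
  subst hd
  have hk : 0 < k := Nat.pos_of_ne_zero (by rintro rfl; exact hchar Nat.cast_zero)
  rw [← mul_add, Nat.mul_div_cancel_left p hk, Nat.mul_div_cancel_left q hk,
    Nat.mul_div_cancel_left _ hk, ← Nat.sub_one_mul, ← Nat.sub_one_mul]
  rw [degreeOf_zero_eq_natDegree] at hPx
  rw [← mul_add, totalDegree_le_iff_totalDegreeLE] at hPdeg
  have hmon : finTwoEquiv F (X 0 ^ (k * p) * X 1 ^ (k * q)) =
      (Polynomial.C (Polynomial.X ^ q) * Polynomial.X ^ p) ^ k := by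
    simp only [map_mul, map_pow, finTwoEquiv_X_zero, finTwoEquiv_X_one]
    ring
  refine ((finTwoEquiv F).toEquiv.existsUnique_congr fun Q => ?_).mpr
    (Polynomial.existsUnique_approxRoot hchar hPx hPdeg)
  simp only [AlgEquiv.toEquiv_eq_coe, AlgEquiv.coe_toEquiv, totalDegree_le_iff_totalDegreeLE,
    degreeOf_zero_eq_natDegree, ← finTwoEquiv_coeff_coeff, Polynomial.ext_iff,
    Polynomial.coeff_X_pow, map_sub, map_add, map_pow, hmon, Polynomial.CornerVanishes]

/-- Approximate `k`-th root in two variables: for `P` with `deg P ≤ d = m + n`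
and `deg_x P < m` (with `k ∣ m`, `k ∣ n`), there is a unique `Q`, monic in `x`
with `deg_x Q = m/k` and `deg Q ≤ d/k`, such that `P + x^m y^n - Q^k` has no
monomial `x^i y^j` with `i ≥ m - m/k` and `j ≥ n - n/k`. -/
theorem approximate_root (F : Type*) [Field F] (k m n d : ℕ) (hk : 2 ≤ k)
    (hchar : (k : F) ≠ 0) (hm : 0 < m) (hn : 0 < n) (hd : d = m + n)
    (hkm : k ∣ m) (hkn : k ∣ n)
    (P : MvPolynomial (Fin 2) F) (hPdeg : P.totalDegree ≤ d)
    (hPx : MvPolynomial.degreeOf 0 P < m) :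
    ∃! Q : MvPolynomial (Fin 2) F,
      Q.totalDegree ≤ d / k ∧
      MvPolynomial.degreeOf 0 Q = m / k ∧
      (∀ j : ℕ, MvPolynomial.coeff (Finsupp.single 0 (m / k) + Finsupp.single 1 j) Q =
        if j = n / k then 1 else 0) ∧
      (∀ i j : ℕ, m - m / k ≤ i → n - n / k ≤ j →
        MvPolynomial.coeff (Finsupp.single 0 i + Finsupp.single 1 j)
          (P + X 0 ^ m * X 1 ^ n - Q ^ k) = 0) :=
  approximate_root_general F k m n d hchar hd hkm hkn P hPdeg hPx
end

section
/- Let F be a field whose characteristic does not divide k, and suppose a₀(y),…,a_ℓ(y) ∈ F[y] satisfy a₀ = y^n and deg aᵢ ≤ n + i, with y-adic valuation val aᵢ ≥ n − n/k (where k | n). Then the triangular system a_ℓ ≡ k b₀^{k−1} b_ℓ + ∑_{i₁+2i₂+⋯+(ℓ−1)i_{ℓ−1}=ℓ, i₀+⋯+i_{ℓ−1}=k} C(k; i₁,…,i_{ℓ−1}) b₀^{i₀}⋯b_{ℓ−1}^{i_{ℓ−1}} modulo polynomials of degree < n − n/k, has a unique solution (b₀,…,b_ℓ) in F[y] with b₀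 = y^{n/k} and deg bᵢ ≤ n/k + i. -/
/-!
In the `t`-th congruence the sum involves only `b₀, …, b_{t-1}`, and the unknown `b_t` enters
only through `k b₀^{k-1} b_t = k y^{n - n/k} b_t`. Since `k` is invertible, the coefficients of degree
`≥ n - n/k` of the congruence determine `b_t` completely, as `k⁻¹` times the quotient of
`a_t - (terms in b₀,…,b_{t-1})` by `y^{n - n/k}`. So the system is a triangular recursion, which
has exactly one solution; the degree bounds propagate along it because every monomial
`b₀^{i₀}⋯b_{t-1}^{i_{t-1}}` with `∑ iᵣ = k`, `∑ r iᵣ = t` has degree `≤ n + t`.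
-/

open Polynomial

section TriangularRecursion

variable {α : Type*} {N : ℕ} (G : (t : Fin N) → (Fin t → α) → α)

def triangularSolution (t : Fin N) : α :=
  G t fun r => triangularSolution (Fin.castLE t.isLt.le r)
termination_by t.val
decreasing_by exact r.isLt

theorem triangularSolution_eq (t : Fin N) :
    triangularSolution G t = G t fun r => triangularSolution G (Fin.castLE t.isLt.le r) := by
  rw [triangularSolution]

theorem eq_triangularSolution {b : Fin N → α}
    (hb : ∀ t, b t = G t fun r => b (Fin.castLE t.isLt.le r)) : b = triangularSolution G := by
  funext t
  induction t using WellFoundedLT.induction with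
  | _ t ih =>
    rw [hb, triangularSolution_eq]
    congr 1
    funext r
    exact ih _ r.isLt

theorem triangularSolution_induction (p : Fin N → α → Prop)
    (h : ∀ (t : Fin N) B, (∀ r : Fin t, p (Fin.castLE t.isLt.le r) (B r)) → p t (G t B))
    (t : Fin N) :
    p t (triangularSolution G t) := by
  induction t using WellFoundedLT.induction with
  | _ t ih =>
    rw [triangularSolution_eq]
    exact h t _ fun r => ih _ r.isLt

end TriangularRecursion

namespace Polynomial

variable {R : Type*} [Semiring R]

theorem coeff_divX_iterate (m : ℕ) (p : R[X]) (d : ℕ) :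
    (divX^[m] p).coeff d = p.coeff (d + m) := by
  induction m generalizing p with
  | zero => rfl
  | succ m ih => rw [Function.iterate_succ_apply, ih, coeff_divX, add_assoc]

theorem natDegree_divX_iterate (m : ℕ) (p : R[X]) :
    (divX^[m] p).natDegree = p.natDegree - m := by
  induction m generalizing p with
  | zero => rfl
  | succ m ih =>
    rw [Function.iterate_succ_apply, ih, natDegree_divX_eq_natDegree_tsub_one, Nat.sub_sub,
      Nat.add_comm]

theorem coeff_sub_C_mul_X_pow_mul_eq_zero_iff {K : Type*} [Field K] {c : K} (hc : c ≠ 0)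
    (m : ℕ) (q b : K[X]) :
    (∀ j, m ≤ j → (q - C c * X ^ m * b).coeff j = 0) ↔ b = c⁻¹ • divX^[m] q := by
  have hcoeff : ∀ d, (q - C c * X ^ m * b).coeff (d + m) = q.coeff (d + m) - c * b.coeff d := by
    intro d
    rw [coeff_sub, mul_comm (C c), mul_assoc, coeff_X_pow_mul, coeff_C_mul]
  constructor
  · intro h
    ext d
    rw [coeff_smul, coeff_divX_iterate, smul_eq_mul, eq_inv_mul_iff_mul_eq₀ hc,
      eq_comm, ← sub_eq_zero, ← hcoeff, h _ (Nat.le_add_left m d)]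
  · rintro rfl j hj
    obtain ⟨d, rfl⟩ := Nat.exists_eq_add_of_le' hj
    rw [hcoeff, coeff_smul, coeff_divX_iterate, smul_eq_mul, mul_inv_cancel_left₀ hc, sub_self]

end Polynomial

/-- The coefficient of `z^t` in `(B₀ + B₁ z + ⋯ + B_{t-1} z^{t-1})^k`, by the multinomial
theorem; the bound `iᵣ ≤ k` built into the index type `Fin (k + 1)` is implied by `∑ iᵣ = k`. -/
noncomputable def multinomialTerms {R : Type*} [CommSemiring R] (k t : ℕ) (B : Fin t → R[X]) :
    R[X] :=
  ∑ i ∈ Finset.univ.filter (fun i : Fin t → Fin (k + 1) =>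
      (∑ r, (i r).val) = k ∧ (∑ r, r.val * (i r).val) = t),
    (Nat.multinomial Finset.univ (fun r => (i r).val) : R[X]) * ∏ r : Fin t, B r ^ (i r).val

theorem natDegree_multinomialTerms_le {R : Type*} [CommSemiring R] (k t q : ℕ) (B : Fin t → R[X])
    (hB : ∀ r, (B r).natDegree ≤ q + r) : (multinomialTerms k t B).natDegree ≤ k * q + t := by
  refine natDegree_sum_le_of_forall_le _ _ fun i hi => ?_
  obtain ⟨hsum, hweight⟩ := (Finset.mem_filter.mp hi).2
  calc _ ≤ (∏ r : Fin t, B r ^ (i r).val).natDegree := by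
        rw [← C_eq_natCast]; exact natDegree_C_mul_le _ _
    _ ≤ ∑ r : Fin t, (i r).val * (q + r) := by
        refine (natDegree_prod_le _ _).trans (Finset.sum_le_sum fun r _ => ?_)
        exact natDegree_pow_le.trans (Nat.mul_le_mul_left _ (hB r))
    _ = (∑ r, (i r).val) * q + ∑ r : Fin t, r.val * (i r).val := by
        rw [Finset.sum_mul, ← Finset.sum_add_distrib]
        exact Finset.sum_congr rfl fun r _ => by ring
    _ = k * q + t := by rw [hsum, hweight]

section TriangularSystem

variable {F : Type*} [Field F] {N : ℕ} (a : Fin N → F[X])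

/-- The value of `b_t` forced by the `t`-th congruence once `b₀, …, b_{t-1}` are known. -/
noncomputable def forcedTerm (k n : ℕ) (t : Fin N) (B : Fin t → F[X]) : F[X] :=
  if t.val = 0 then X ^ (n / k) else (k : F)⁻¹ • divX^[n - n / k] (a t - multinomialTerms k t B)

variable {k n : ℕ}

theorem natDegree_forcedTerm_le (hkn : k ∣ n) (hadeg : ∀ i, (a i).natDegree ≤ n + i.val)
    (t : Fin N) (B : Fin t → F[X]) (hB : ∀ r, (B r).natDegree ≤ n / k + r.val) :
    (forcedTerm a k n t B).natDegree ≤ n / k + t := by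
  unfold forcedTerm
  split_ifs with ht
  · rw [ht, add_zero]
    exact natDegree_X_pow_le _
  have hdeg := natDegree_sub_le_of_le (hadeg t) (natDegree_multinomialTerms_le k t (n / k) B hB)
  rw [Nat.mul_div_cancel' hkn, max_self] at hdeg
  refine (natDegree_smul_le _ _).trans ?_
  rwa [natDegree_divX_iterate, tsub_le_iff_right, add_right_comm,
    Nat.add_sub_of_le (Nat.div_le_self n k)]

theorem coeff_sub_eq_zero_iff_eq_forcedTerm (hchar : (k : F) ≠ 0) (hkn : k ∣ n) {t : Fin N}
    (ht : t.val ≠ 0) (B : Fin t → F[X]) (b : F[X]) :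
    (∀ j, n - n / k ≤ j →
      (a t - ((k : F[X]) * (X ^ (n / k)) ^ (k - 1) * b + multinomialTerms k t B)).coeff j = 0) ↔
      b = forcedTerm a k n t B := by
  have hlead : (k : F[X]) * (X ^ (n / k)) ^ (k - 1) = C (k : F) * X ^ (n - n / k) := by
    rw [← pow_mul, ← C_eq_natCast, Nat.mul_sub_one, Nat.div_mul_cancel hkn]
  rw [hlead, sub_add_eq_sub_sub_swap, forcedTerm, if_neg ht]
  exact coeff_sub_C_mul_X_pow_mul_eq_zero_iff hchar _ _ _

end TriangularSystem

theorem triangular_system_unique_solution_general (F : Type*) [Field F] (k n ℓ : ℕ)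
    (hchar : (k : F) ≠ 0) (hkn : k ∣ n)
    (a : Fin (ℓ + 1) → Polynomial F)
    (hadeg : ∀ i : Fin (ℓ + 1), (a i).natDegree ≤ n + i.val) :
    ∃! b : Fin (ℓ + 1) → Polynomial F,
      b 0 = Polynomial.X ^ (n / k) ∧
      (∀ i : Fin (ℓ + 1), (b i).natDegree ≤ n / k + i.val) ∧
      (∀ t : Fin (ℓ + 1), 0 < t.val → ∀ j : ℕ, n - n / k ≤ j →
        (a t - ((k : Polynomial F) * b 0 ^ (k - 1) * b t +
          ∑ i ∈ Finset.univ.filter (fun i : Fin t.val → Fin (k + 1) =>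
              (∑ r, (i r).val) = k ∧ (∑ r, r.val * (i r).val) = t.val),
            (Nat.multinomial Finset.univ (fun r => (i r).val) : Polynomial F) *
              ∏ r : Fin t.val, b (Fin.castLE (Nat.le_of_lt t.isLt) r) ^ (i r).val)).coeff j
          = 0) := by
  have hb₀ : triangularSolution (forcedTerm a k n) 0 = X ^ (n / k) := by
    rw [triangularSolution_eq]
    exact if_pos rfl
  refine ⟨triangularSolution (forcedTerm a k n), ⟨hb₀, fun i => ?_, fun t ht j hj => ?_⟩, ?_⟩
  · exact triangularSolution_induction _ (fun t (b : F[X]) => b.natDegree ≤ n / k + t)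
      (natDegree_forcedTerm_le a hkn hadeg) i
  · rw [hb₀]
    exact (coeff_sub_eq_zero_iff_eq_forcedTerm a hchar hkn ht.ne' _ _).mpr
      (triangularSolution_eq _ t) j hj
  · rintro b ⟨hb0, -, hb⟩
    refine eq_triangularSolution _ fun t => ?_
    by_cases ht : t.val = 0
    · rw [show t = 0 from Fin.ext ht, hb0]
      exact (if_pos rfl).symm
    · refine (coeff_sub_eq_zero_iff_eq_forcedTerm a hchar hkn ht _ _).mp ?_
      rw [← hb0]
      exact hb t (Nat.pos_of_ne_zero ht)

/-- The triangular system `a_t ≡ k b₀^{k-1} b_t + ∑ C(k;i) b₀^{i₀}⋯b_{t-1}^{i_{t-1}}`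
(modulo polynomials of degree `< n - n/k`) has a unique solution
`(b₀,…,b_ℓ)` with `b₀ = y^{n/k}` and `deg bᵢ ≤ n/k + i`. -/
theorem triangular_system_unique_solution (F : Type*) [Field F] (k n ℓ : ℕ)
    (hk : 2 ≤ k) (hchar : (k : F) ≠ 0) (hkn : k ∣ n) (hn : 0 < n)
    (a : Fin (ℓ + 1) → Polynomial F)
    (ha0 : a 0 = Polynomial.X ^ n)
    (hadeg : ∀ i : Fin (ℓ + 1), (a i).natDegree ≤ n + i.val)
    (haval : ∀ i : Fin (ℓ + 1), ∀ j : ℕ, j < n - n / k → (a i).coeff j = 0) :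
    ∃! b : Fin (ℓ + 1) → Polynomial F,
      b 0 = Polynomial.X ^ (n / k) ∧
      (∀ i : Fin (ℓ + 1), (b i).natDegree ≤ n / k + i.val) ∧
      (∀ t : Fin (ℓ + 1), 0 < t.val → ∀ j : ℕ, n - n / k ≤ j →
        (a t - ((k : Polynomial F) * b 0 ^ (k - 1) * b t +
          ∑ i ∈ Finset.univ.filter (fun i : Fin t.val → Fin (k + 1) =>
              (∑ r, (i r).val) = k ∧ (∑ r, r.val * (i r).val) = t.val),
            (Nat.multinomial Finset.univ (fun r => (i r).val) : Polynomial F) *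
              ∏ r : Fin t.val, b (Fin.castLE (Nat.le_of_lt t.isLt) r) ^ (i r).val)).coeff j
          = 0) :=
  triangular_system_unique_solution_general F k n ℓ hchar hkn a hadeg
end

section
/- Define m₀ = k⌈d/k⌉ and m_{i+1} = (k−1)⌈mᵢ/k⌉ for i ≥ 0, where k ≥ 2 and d ≥ 1 are integers. Then for all i, mᵢ ≤ (d+k)e^{−i/k} + k(k−1); in particular, for any integer ℓ ≥ k·ln(d/k + 1), one has m_ℓ ≤ k². -/
/-! Since `⌈n/k⌉ ≤ (n + k - 1)/k` as real numbers, the recursion satisfies `m_{i+1} ≤ (1 - 1/k) mᵢ + (k - 1)`,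
an affine contraction with fixed point `k(k - 1)`. Each step shrinks the distance above the
fixed point by `1 - 1/k ≤ e^{-1/k}`, and `m₀ ≤ d + k`. For `ℓ ≥ k log(d/k + 1)` the
transient term `(d + k) e^{-ℓ/k}` is at most `k`, so `m_ℓ ≤ k + k(k - 1) = k²`. -/

open Real

theorem le_exp_mul_add_of_affine_contraction {x : ℕ → ℝ} {r b A : ℝ} (hr₀ : 0 < r)
    (hr₁ : r ≤ 1) (hA : 0 ≤ A) (h0 : x 0 ≤ A + b / r) (hstep : ∀ i, x (i + 1) ≤ (1 - r) * x i + b)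
    (i : ℕ) : x i ≤ A * exp (-r * i) + b / r := by
  induction i with
  | zero => simpa using h0
  | succ i ih =>
    have hcontract : (1 - r) * A ≤ exp (-r) * A :=
      mul_le_mul_of_nonneg_right (by linarith [add_one_le_exp (-r)]) hA
    have hexp : exp (-r * ↑(i + 1)) = exp (-r) * exp (-r * i) := by
      rw [← exp_add]; congr 1; push_cast; ring
    calc x (i + 1) ≤ (1 - r) * x i + b := hstep i
      _ ≤ (1 - r) * (A * exp (-r * i) + b / r) + b := by gcongr
      _ = (1 - r) * A * exp (-r * i) + b / r := by field_simp; ring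
      _ ≤ exp (-r) * A * exp (-r * i) + b / r := by gcongr
      _ = A * exp (-r * ↑(i + 1)) + b / r := by rw [hexp]; ring

theorem cast_sub_one_mul_ceil_div_le (k n : ℕ) (hk : 0 < k) :
    (((k - 1) * ((n + k - 1) / k) : ℕ) : ℝ) ≤ (1 - 1 / k) * n + (k - 1) := by
  have hk' : (1 : ℝ) ≤ k := by exact_mod_cast hk
  have hdiv : (((n + k - 1) / k : ℕ) : ℝ) ≤ (n + k - 1) / k := by
    have := Nat.cast_div_le (α := ℝ) (m := n + k - 1) (n := k)
    rwa [Nat.cast_sub (by omega), Nat.cast_add, Nat.cast_one] at this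
  calc (((k - 1) * ((n + k - 1) / k) : ℕ) : ℝ)
      = (k - 1) * (((n + k - 1) / k : ℕ) : ℝ) := by push_cast [Nat.cast_sub hk]; ring
    _ ≤ (k - 1) * ((n + k - 1) / k) := by gcongr
    _ = (1 - 1 / k) * n + (k - 1) - (k - 1) / k := by field_simp
    _ ≤ (1 - 1 / k) * n + (k - 1) := by
      have : 0 ≤ (k - 1 : ℝ) / k := by apply div_nonneg <;> linarith
      linarith

theorem add_mul_exp_neg_div_le {d k ℓ : ℝ} (hd : 0 ≤ d) (hk : 0 < k)
    (hℓ : k * log (d / k + 1) ≤ ℓ) : (d + k) * exp (-ℓ / k) ≤ k := by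
  have hpos : 0 < d / k + 1 := by positivity
  have hlog : log (d / k + 1) ≤ ℓ / k := by rw [le_div_iff₀ hk]; linarith
  calc (d + k) * exp (-ℓ / k) ≤ (d + k) * exp (-log (d / k + 1)) := by
        gcongr; rw [neg_div]; linarith
    _ = k := by rw [exp_neg, exp_log hpos]; field_simp

theorem degree_recursion_bound_general (k d : ℕ) (hk : 2 ≤ k)
    (m : ℕ → ℕ) (h0 : m 0 = k * ((d + k - 1) / k))
    (hrec : ∀ i, m (i + 1) = (k - 1) * ((m i + k - 1) / k)) :
    (∀ i : ℕ, (m i : ℝ) ≤ (d + k : ℝ) * Real.exp (-(i : ℝ) / k) + k * (k - 1)) ∧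
    (∀ ℓ : ℕ, (k : ℝ) * Real.log ((d : ℝ) / k + 1) ≤ (ℓ : ℝ) → m ℓ ≤ k ^ 2) := by
  have hkR : (2 : ℝ) ≤ k := by exact_mod_cast hk
  have hm0 : (m 0 : ℝ) ≤ d + k := by
    have := Nat.mul_div_le (d + k - 1) k
    exact_mod_cast (show m 0 ≤ d + k by omega)
  have hstep (i : ℕ) : (m (i + 1) : ℝ) ≤ (1 - 1 / k) * m i + (k - 1) := by
    rw [hrec]; exact cast_sub_one_mul_ceil_div_le k (m i) (by omega)
  have hfix : ((k : ℝ) - 1) / (1 / k) = k * (k - 1) := by field_simp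
  have bound (i : ℕ) : (m i : ℝ) ≤ (d + k : ℝ) * exp (-(i : ℝ) / k) + k * (k - 1) := by
    have := le_exp_mul_add_of_affine_contraction (x := fun i => (m i : ℝ)) (r := 1 / k)
      (A := d + k) (by positivity) (by rw [div_le_one₀] <;> linarith) (by positivity)
      (by rw [hfix]; nlinarith) hstep i
    rwa [hfix, neg_mul, one_div_mul_eq_div, ← neg_div] at this
  refine ⟨bound, fun ℓ hℓ => ?_⟩
  have := add_mul_exp_neg_div_le (Nat.cast_nonneg d) (by positivity) hℓ
  have : (m ℓ : ℝ) ≤ (k : ℝ) ^ 2 := by linarith [bound ℓ]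
  exact_mod_cast this

/-- For the recursion `m₀ = k⌈d/k⌉`, `m_{i+1} = (k-1)⌈mᵢ/k⌉`, one has
`mᵢ ≤ (d+k)e^{-i/k} + k(k-1)`; in particular `m_ℓ ≤ k²` whenever
`ℓ ≥ k·ln(d/k + 1)`. -/
theorem degree_recursion_bound (k d : ℕ) (hk : 2 ≤ k) (hd : 1 ≤ d)
    (m : ℕ → ℕ) (h0 : m 0 = k * ((d + k - 1) / k))
    (hrec : ∀ i, m (i + 1) = (k - 1) * ((m i + k - 1) / k)) :
    (∀ i : ℕ, (m i : ℝ) ≤ (d + k : ℝ) * Real.exp (-(i : ℝ) / k) + k * (k - 1)) ∧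
    (∀ ℓ : ℕ, (k : ℝ) * Real.log ((d : ℝ) / k + 1) ≤ (ℓ : ℝ) → m ℓ ≤ k ^ 2) :=
  degree_recursion_bound_general k d hk m h0 hrec
end

section
/- Strict Waring for F[x,y]: Let F be a field with more than k elements, whose characteristic does not divide k, and in which every element is a sum of w k-th powers. Then every polynomial P ∈ F[x,y] of degree d ≥ 2k⁴ can be written P = Q₁^k + ⋯ + Q_s^k with Qᵢ ∈ F[x,y], deg Qᵢ^k ≤ d + k³, and s ≤ 2k³·ln(d/k + 1)·ln(2k) + 7k⁴·ln(k)·w². -/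
/-!
For distinct `c₀, …, c_k ∈ F`, inverting a Vandermonde matrix gives `λᵢ ∈ F` with
`u v^(k-1) = ∑ λᵢ (u + cᵢ v)^k` (only the binomial term with `u¹` survives, and `char F ∤ k` lets
one divide by `k`). Writing each `λᵢ` as a sum of `w` `k`-th powers turns `u v^(k-1)` into a sum of
`(k+1) w` `k`-th powers of degree `≤ max (deg u) (deg v)`.

It therefore suffices to write `P = ∑ₑ uₑ (xᵉ)^(k-1)` with at most `4k²` corners `e` and
`deg uₑ, |e| ≤ D := ⌊d/k⌋ + k²`, so that `k D ≤ d + k³`. With a step `μ ≈ d / (2k(k-1))`,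
`Δ = (k-1) μ` and `M ≈ (d - D) / (k-1)`, a monomial `x^a y^b` of degree `h ≤ d` gets the
corner of total degree `t = M - μ ⌊(d - h)/Δ⌋`, which makes `h - (k-1) t ≤ D`, split as
`(min (μ ⌊a/Δ⌋) t, t - min (μ ⌊a/Δ⌋) t)`. Both indices are below `2k`, and
`4k² (k+1) w ≤ 7 k⁴ ln k · w²`.
-/

open MvPolynomial Finset

theorem Matrix.exists_sum_mul_pow_eq_of_injective_s19 {F : Type*} [Field F] {n : ℕ} {c : Fin n → F}
    (hc : Function.Injective c) (b : Fin n → F) :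
    ∃ l : Fin n → F, ∀ r : Fin n, ∑ i, l i * c i ^ (r : ℕ) = b r := by
  have hV : IsUnit (vandermonde c) :=
    (isUnit_iff_isUnit_det _).mpr (det_vandermonde_ne_zero_iff.mpr hc).isUnit
  obtain ⟨l, hl⟩ := vecMul_surjective_iff_isUnit.mpr hV b
  exact ⟨l, fun r => by simpa [vecMul, dotProduct] using congrFun hl r⟩

theorem exists_mul_pow_eq_sum_smul_add_smul_pow {F : Type*} [Field F] {k : ℕ}
    (hk : (k : F) ≠ 0) (hF : (k : Cardinal) < Cardinal.mk F)
    (A : Type*) [CommRing A] [Algebra F A] :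
    ∃ l c : Fin (k + 1) → F, ∀ u v : A, u * v ^ (k - 1) = ∑ i, l i • (u + c i • v) ^ k := by
  obtain ⟨c⟩ : Nonempty (Fin (k + 1) ↪ F) := by
    rw [← Cardinal.lift_mk_le', Cardinal.mk_fin, Cardinal.lift_natCast, Cardinal.lift_id'.{0}]
    exact_mod_cast Cardinal.add_one_le_of_lt hF
  obtain ⟨l, hl⟩ := Matrix.exists_sum_mul_pow_eq_of_injective_s19 c.injective
    fun r => if (r : ℕ) = k - 1 then (k : F)⁻¹ else 0
  have hk1 : 1 ≤ k := Nat.one_le_iff_ne_zero.mpr (by rintro rfl; exact hk Nat.cast_zero)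
  have hl' : ∀ j ∈ range (k + 1), ∑ i, l i * c i ^ (k - j) = if j = 1 then (k : F)⁻¹ else 0 := by
    intro j hj
    have hj : j ≤ k := Nat.lt_succ_iff.mp (mem_range.mp hj)
    rw [hl ⟨k - j, by omega⟩]
    exact if_congr (by dsimp only; omega) rfl rfl
  refine ⟨l, c, fun u v => ?_⟩
  calc u * v ^ (k - 1) = (k : F)⁻¹ • (u ^ 1 * v ^ (k - 1) * (k.choose 1 : A)) := by
        rw [Nat.choose_one_right, pow_one, mul_comm _ (k : A), ← nsmul_eq_mul,
          ← Nat.cast_smul_eq_nsmul F, smul_smul, inv_mul_cancel₀ hk, one_smul]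
    _ = ∑ j ∈ range (k + 1),
          (∑ i, l i * c i ^ (k - j)) • (u ^ j * v ^ (k - j) * (k.choose j : A)) := by
        rw [sum_eq_single 1 (fun j hj hj1 => by rw [hl' j hj, if_neg hj1, zero_smul])
          (fun h => absurd (mem_range.mpr (by omega)) h), hl' 1 (mem_range.mpr (by omega)),
          if_pos rfl]
    _ = ∑ i, l i • (u + c i • v) ^ k := by
        simp_rw [add_pow, smul_sum, sum_smul]
        rw [sum_comm]
        refine sum_congr rfl fun i _ => sum_congr rfl fun j _ => ?_
        rw [smul_pow, mul_smul, mul_smul_comm, smul_mul_assoc]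

namespace MvPolynomial

variable {σ R : Type*} [CommSemiring R]

def IsSumOfPowers (k n D : ℕ) (P : MvPolynomial σ R) : Prop :=
  ∃ Q : Fin n → MvPolynomial σ R, P = ∑ i, Q i ^ k ∧ ∀ i, (Q i).totalDegree ≤ D

variable {k D : ℕ}

theorem IsSumOfPowers.zero : IsSumOfPowers k 0 D (0 : MvPolynomial σ R) :=
  ⟨Fin.elim0, by simp, Fin.rec0⟩

theorem IsSumOfPowers.add {n m : ℕ} {P P' : MvPolynomial σ R} (hP : IsSumOfPowers k n D P)
    (hP' : IsSumOfPowers k m D P') : IsSumOfPowers k (n + m) D (P + P') := by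
  obtain ⟨Q, rfl, hQ⟩ := hP
  obtain ⟨Q', rfl, hQ'⟩ := hP'
  exact ⟨Fin.append Q Q', by simp [Fin.sum_univ_add],
    Fin.addCases (by simpa using hQ) (by simpa using hQ')⟩

theorem IsSumOfPowers.sum {ι : Type*} {n : ℕ} (T : Finset ι) {f : ι → MvPolynomial σ R}
    (hf : ∀ e ∈ T, IsSumOfPowers k n D (f e)) : IsSumOfPowers k (#T * n) D (∑ e ∈ T, f e) := by
  classical
  induction T using Finset.induction_on with
  | empty => simpa using IsSumOfPowers.zero
  | insert a T ha ih =>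
    rw [sum_insert ha, card_insert_of_notMem ha, add_one_mul, add_comm]
    exact (hf a (mem_insert_self a T)).add (ih fun e he => hf e (mem_insert_of_mem he))

theorem isSumOfPowers_sum_pow_smul_pow {w : ℕ} (b : Fin w → R) {X : MvPolynomial σ R}
    (hX : X.totalDegree ≤ D) : IsSumOfPowers k w D ((∑ i, b i ^ k) • X ^ k) :=
  ⟨fun i => b i • X, by simp_rw [sum_smul, smul_pow],
    fun _ => (totalDegree_smul_le _ _).trans hX⟩

theorem eq_sum_mul_monomial_pow [DecidableEq (σ →₀ ℕ)] (P : MvPolynomial σ R) (n : ℕ)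
    (S : Finset (σ →₀ ℕ)) (c : (σ →₀ ℕ) → σ →₀ ℕ) (hcS : ∀ m ∈ P.support, c m ∈ S)
    (hc : ∀ m ∈ P.support, n • c m ≤ m) :
    P = ∑ e ∈ S, (∑ m ∈ P.support with c m = e, monomial (m - n • e) (coeff m P)) *
      monomial e 1 ^ n := by
  calc P = ∑ m ∈ P.support, monomial m (coeff m P) := (support_sum_monomial_coeff P).symm
    _ = ∑ e ∈ S, ∑ m ∈ P.support with c m = e, monomial m (coeff m P) :=
        (sum_fiberwise_of_maps_to hcS _).symm
    _ = _ := by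
        refine sum_congr rfl fun e _ => ?_
        rw [sum_mul]
        refine sum_congr rfl fun m hm => ?_
        obtain ⟨hmP, rfl⟩ := mem_filter.mp hm
        rw [monomial_pow, one_pow, monomial_mul, mul_one, tsub_add_cancel_of_le (hc m hmP)]

variable {F : Type*} [Field F] {w : ℕ}

theorem isSumOfPowers_mul_pow (hk : (k : F) ≠ 0) (hF : (k : Cardinal) < Cardinal.mk F)
    (hW : ∀ a : F, ∃ b : Fin w → F, a = ∑ i, b i ^ k) {u v : MvPolynomial σ F}
    (hu : u.totalDegree ≤ D) (hv : v.totalDegree ≤ D) :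
    IsSumOfPowers k ((k + 1) * w) D (u * v ^ (k - 1)) := by
  obtain ⟨l, c, hlc⟩ := exists_mul_pow_eq_sum_smul_add_smul_pow hk hF (MvPolynomial σ F)
  have hterm (i : Fin (k + 1)) (_ : i ∈ univ) :
      IsSumOfPowers k w D (l i • (u + c i • v) ^ k) := by
    obtain ⟨b, hb⟩ := hW (l i)
    rw [hb]
    exact isSumOfPowers_sum_pow_smul_pow b
      ((totalDegree_add _ _).trans (max_le hu ((totalDegree_smul_le _ _).trans hv)))
  simpa [hlc] using IsSumOfPowers.sum univ hterm

theorem isSumOfPowers_of_exists_corner (hk : (k : F) ≠ 0) (hF : (k : Cardinal) < Cardinal.mk F)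
    (hW : ∀ a : F, ∃ b : Fin w → F, a = ∑ i, b i ^ k) (P : MvPolynomial σ F)
    (S : Finset (σ →₀ ℕ)) (hS : ∀ e ∈ S, e.degree ≤ D)
    (hP : ∀ m ∈ P.support, ∃ e ∈ S, (k - 1) • e ≤ m ∧ (m - (k - 1) • e).degree ≤ D) :
    IsSumOfPowers k (#S * ((k + 1) * w)) D P := by
  classical
  choose! c hcS hc hdeg using hP
  rw [eq_sum_mul_monomial_pow P (k - 1) S c hcS hc]
  refine IsSumOfPowers.sum S fun e he => isSumOfPowers_mul_pow hk hF hW ?_ ?_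
  · refine totalDegree_finsetSum_le fun m hm => ?_
    obtain ⟨hmP, rfl⟩ := mem_filter.mp hm
    exact (totalDegree_monomial_le _ _).trans (hdeg m hmP)
  · exact (totalDegree_monomial_le _ _).trans (hS e he)

end MvPolynomial

theorem Nat.exists_corner_index {k D M μ d a b : ℕ} (hdM : d ≤ D + (k - 1) * M)
    (hM : 0 < M → (k - 1) * M + 2 * ((k - 1) * μ) ≤ d + 1) (hdμ : d < 2 * k * ((k - 1) * μ))
    (hab : a + b ≤ d) :
    ∃ i < 2 * k, ∃ j < 2 * k,
      (k - 1) * min (μ * i) (M - μ * j) ≤ a ∧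
      (k - 1) * (M - μ * j - min (μ * i) (M - μ * j)) ≤ b ∧
      a + b ≤ D + (k - 1) * (M - μ * j) := by
  have hΔ0 : 0 < (k - 1) * μ := Nat.pos_of_ne_zero fun h => by simp [h] at hdμ
  have hlt {x : ℕ} (hx : x ≤ d) : x / ((k - 1) * μ) < 2 * k :=
    (Nat.div_lt_iff_lt_mul hΔ0).mpr (by linarith)
  have hdiv (x : ℕ) : (k - 1) * (μ * (x / ((k - 1) * μ))) ≤ x ∧
      x < (k - 1) * (μ * (x / ((k - 1) * μ))) + (k - 1) * μ := by
    rw [← mul_assoc]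
    exact ⟨Nat.mul_div_le x _, Nat.lt_mul_div_succ x hΔ0 |>.trans_eq (by ring)⟩
  refine ⟨a / ((k - 1) * μ), hlt (by omega), (d - (a + b)) / ((k - 1) * μ), hlt (by omega), ?_⟩
  obtain ⟨hi, hi'⟩ := hdiv a
  obtain ⟨hj, hj'⟩ := hdiv (d - (a + b))
  generalize μ * (a / ((k - 1) * μ)) = s at *
  generalize μ * ((d - (a + b)) / ((k - 1) * μ)) = r at *
  clear hlt hdiv hdμ
  have hMC : M = 0 → (k - 1) * M = 0 := by rintro rfl; rfl
  rw [min_comm s, tsub_min, mul_min_of_nonneg _ _ (Nat.zero_le _), Nat.mul_sub, Nat.mul_sub,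
    Nat.mul_sub]
  generalize (k - 1) * M = C at *
  generalize (k - 1) * r = B at *
  generalize (k - 1) * s = A at *
  generalize (k - 1) * μ = Δ at *
  omega

theorem Nat.exists_corner_params {k : ℕ} (hk : 2 ≤ k) (d : ℕ) :
    ∃ M μ, M ≤ d / k + k ^ 2 ∧ d ≤ d / k + k ^ 2 + (k - 1) * M ∧
      (0 < M → (k - 1) * M + 2 * ((k - 1) * μ) ≤ d + 1) ∧ d < 2 * k * ((k - 1) * μ) := by
  set D := d / k + k ^ 2 with hD
  have hk1 : 0 < k - 1 := by omega
  have hr : k * (d / k) ≤ d ∧ d < k * (d / k) + k :=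
    ⟨Nat.mul_div_le d k, by have := Nat.lt_mul_div_succ d (by omega : 0 < k); linarith⟩
  have hM : (k - 1) * ((d - D + (k - 2)) / (k - 1)) ≤ d - D + (k - 2) ∧
      d - D + (k - 2) < (k - 1) * ((d - D + (k - 2)) / (k - 1)) + (k - 1) :=
    ⟨Nat.mul_div_le _ _, by have := Nat.lt_mul_div_succ (d - D + (k - 2)) hk1; linarith⟩
  have hq : k * (2 * (k - 1) * (d / (2 * k * (k - 1)))) ≤ d := by
    rw [← mul_assoc, mul_left_comm, ← mul_assoc]; exact Nat.mul_div_le d _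
  have hq' : 2 * (k - 1) * (d / (2 * k * (k - 1))) ≤ d / k :=
    (Nat.le_div_iff_mul_le (by omega)).mpr (by linarith)
  refine ⟨(d - D + (k - 2)) / (k - 1), d / (2 * k * (k - 1)) + 1, ?_, ?_, ?_, ?_⟩
  · refine Nat.le_of_mul_le_mul_left (hM.1.trans ?_) hk1
    have e : (k - 1) * D + D = k * (d / k) + k ^ 3 := by
      rw [← Nat.succ_mul, Nat.succ_eq_add_one, Nat.sub_add_cancel (by omega), hD]; ring
    have : 2 * k ≤ k ^ 3 := by nlinarith
    have : k - 1 ≤ (k - 1) * D := Nat.le_mul_of_pos_right _ (by positivity)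
    omega
  · omega
  · intro h
    have e : 2 * ((k - 1) * (d / (2 * k * (k - 1)) + 1)) =
        2 * (k - 1) * (d / (2 * k * (k - 1))) + 2 * (k - 1) := by ring
    have := Nat.mul_le_mul_left (k - 1) h
    have : 3 * k ≤ k ^ 2 + 5 := by nlinarith
    omega
  · have := Nat.lt_mul_div_succ d (by positivity : 0 < 2 * k * (k - 1))
    linarith

theorem Finsupp.degree_tsub_of_le {σ : Type*} {m e : σ →₀ ℕ} (h : e ≤ m) :
    (m - e).degree = m.degree - e.degree :=
  eq_tsub_of_add_eq (by rw [← map_add, tsub_add_cancel_of_le h])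

theorem Finsupp.exists_corner_finset {k : ℕ} (hk : 2 ≤ k) (d : ℕ) :
    ∃ S : Finset (Fin 2 →₀ ℕ), #S ≤ 4 * k ^ 2 ∧ (∀ e ∈ S, e.degree ≤ d / k + k ^ 2) ∧
      ∀ m : Fin 2 →₀ ℕ, m.degree ≤ d →
        ∃ e ∈ S, (k - 1) • e ≤ m ∧ (m - (k - 1) • e).degree ≤ d / k + k ^ 2 := by
  obtain ⟨M, μ, hMD, hdM, hM, hdμ⟩ := Nat.exists_corner_params hk d
  let corner (ij : ℕ × ℕ) : Fin 2 →₀ ℕ :=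
    single 0 (min (μ * ij.1) (M - μ * ij.2)) +
      single 1 (M - μ * ij.2 - min (μ * ij.1) (M - μ * ij.2))
  have hcorner (ij : ℕ × ℕ) : (corner ij).degree = M - μ * ij.2 := by
    simp only [corner, map_add, degree_single]
    exact Nat.add_sub_cancel' (min_le_right _ _)
  refine ⟨(range (2 * k) ×ˢ range (2 * k)).image corner,
    card_image_le.trans (by simp only [card_product, card_range]; ring_nf; rfl), ?_, fun m hm => ?_⟩
  · simp only [mem_image, forall_exists_index, and_imp]
    rintro _ ij - rfl
    exact (hcorner ij).trans_le ((Nat.sub_le _ _).trans hMD)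
  have hm' : m 0 + m 1 ≤ d := by rwa [degree_eq_sum, Fin.sum_univ_two] at hm
  obtain ⟨i, hi, j, hj, h0, h1, hdeg⟩ := Nat.exists_corner_index hdM hM hdμ hm'
  have hle : (k - 1) • corner (i, j) ≤ m := by
    rw [Finsupp.le_def, Fin.forall_fin_two]
    simpa [corner] using ⟨h0, h1⟩
  refine ⟨corner (i, j), mem_image_of_mem _ (mem_product.mpr ⟨mem_range.mpr hi, mem_range.mpr hj⟩),
    hle, ?_⟩
  rw [degree_tsub_of_le hle, map_nsmul, hcorner, smul_eq_mul, degree_eq_sum, Fin.sum_univ_two]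
  exact Nat.sub_le_iff_le_add.mpr hdeg

theorem four_mul_sq_mul_succ_mul_le {k : ℕ} (hk : 2 ≤ k) (w : ℕ) :
    ((4 * k ^ 2 * ((k + 1) * w) : ℕ) : ℝ) ≤ 7 * (k : ℝ) ^ 4 * Real.log k * (w : ℝ) ^ 2 := by
  have hk' : (2 : ℝ) ≤ k := by exact_mod_cast hk
  have hlog : (0.69 : ℝ) ≤ Real.log k :=
    (Real.log_two_gt_d9.trans_le' (by norm_num)).le.trans (Real.log_le_log (by norm_num) hk')
  have hw : (w : ℝ) ≤ (w : ℝ) ^ 2 := by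
    rcases Nat.eq_zero_or_pos w with rfl | hw
    · simp
    · nlinarith [(Nat.one_le_cast (α := ℝ)).mpr hw]
  push_cast
  have hpoly : 4 * (k : ℝ) ^ 2 * (k + 1) ≤ 7 * (k : ℝ) ^ 4 * Real.log k := by
    have : 4 * ((k : ℝ) + 1) ≤ 7 * 0.69 * (k : ℝ) ^ 2 := by nlinarith
    calc 4 * (k : ℝ) ^ 2 * (k + 1) = (k : ℝ) ^ 2 * (4 * (k + 1)) := by ring
      _ ≤ (k : ℝ) ^ 2 * (7 * 0.69 * (k : ℝ) ^ 2) := by gcongr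
      _ ≤ 7 * (k : ℝ) ^ 4 * Real.log k := by nlinarith [pow_nonneg (Nat.cast_nonneg (α := ℝ) k) 4]
  calc 4 * (k : ℝ) ^ 2 * ((k + 1) * w) = 4 * (k : ℝ) ^ 2 * (k + 1) * w := by ring
    _ ≤ 7 * (k : ℝ) ^ 4 * Real.log k * (w : ℝ) ^ 2 :=
        mul_le_mul hpoly hw (Nat.cast_nonneg w) (by positivity)

theorem strict_waring_two_variables_general (F : Type*) [Field F] (k w : ℕ) (hk : 2 ≤ k)
    (hcard : (k : Cardinal) < Cardinal.mk F) (hchar : (k : F) ≠ 0)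
    (hW : ∀ a : F, ∃ b : Fin w → F, a = ∑ i, b i ^ k)
    (d : ℕ)
    (P : MvPolynomial (Fin 2) F) (hP : P.totalDegree = d) :
    ∃ (s : ℕ) (Q : Fin s → MvPolynomial (Fin 2) F),
      P = ∑ i, Q i ^ k ∧
      (∀ i, (Q i ^ k).totalDegree ≤ d + k ^ 3) ∧
      (s : ℝ) ≤ 2 * (k : ℝ) ^ 3 * Real.log ((d : ℝ) / k + 1) * Real.log (2 * k) +
        7 * (k : ℝ) ^ 4 * Real.log k * (w : ℝ) ^ 2 := by
  obtain ⟨S, hcardS, hSdeg, hS⟩ := Finsupp.exists_corner_finset hk d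
  obtain ⟨Q, hPQ, hQ⟩ := isSumOfPowers_of_exists_corner hchar hcard hW P S hSdeg
    fun m hm => hS m (hP ▸ le_totalDegree hm)
  refine ⟨_, Q, hPQ, fun i => ?_, ?_⟩
  · calc (Q i ^ k).totalDegree ≤ k * (d / k + k ^ 2) :=
          (totalDegree_pow _ _).trans (Nat.mul_le_mul_left k (hQ i))
      _ = k * (d / k) + k ^ 3 := by ring
      _ ≤ d + k ^ 3 := Nat.add_le_add_right (Nat.mul_div_le d k) _
  · have hk' : (1 : ℝ) ≤ k := by exact_mod_cast (by omega : 1 ≤ k)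
    have hlog : 0 ≤ 2 * (k : ℝ) ^ 3 * Real.log ((d : ℝ) / k + 1) * Real.log (2 * k) :=
      mul_nonneg (mul_nonneg (by positivity) (Real.log_nonneg (le_add_of_nonneg_left (by positivity))))
        (Real.log_nonneg (by linarith))
    calc (#S * ((k + 1) * w) : ℕ) ≤ ((4 * k ^ 2 * ((k + 1) * w) : ℕ) : ℝ) := by
          exact_mod_cast Nat.mul_le_mul_right _ hcardS
      _ ≤ _ := (four_mul_sq_mul_succ_mul_le hk w).trans (le_add_of_nonneg_left hlog)

/-- Strict Waring for `F[x,y]`: every polynomial of degree `d ≥ 2k⁴` is a sum of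
`s` `k`-th powers with `deg Qᵢ^k ≤ d + k³` and
`s ≤ 2k³·ln(d/k + 1)·ln(2k) + 7k⁴·ln(k)·w²`. -/
theorem strict_waring_two_variables (F : Type*) [Field F] (k w : ℕ) (hk : 2 ≤ k)
    (hw : 1 ≤ w) (hcard : (k : Cardinal) < Cardinal.mk F) (hchar : (k : F) ≠ 0)
    (hW : ∀ a : F, ∃ b : Fin w → F, a = ∑ i, b i ^ k)
    (d : ℕ) (hd : 2 * k ^ 4 ≤ d)
    (P : MvPolynomial (Fin 2) F) (hP : P.totalDegree = d) :
    ∃ (s : ℕ) (Q : Fin s → MvPolynomial (Fin 2) F),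
      P = ∑ i, Q i ^ k ∧
      (∀ i, (Q i ^ k).totalDegree ≤ d + k ^ 3) ∧
      (s : ℝ) ≤ 2 * (k : ℝ) ^ 3 * Real.log ((d : ℝ) / k + 1) * Real.log (2 * k) +
        7 * (k : ℝ) ^ 4 * Real.log k * (w : ℝ) ^ 2 :=
  strict_waring_two_variables_general F k w hk hcard hchar hW d P hP
end
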